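/- arXiv:2405.12660 — 7 statements merged into one kernel-verified Lean document; each statement's English description precedes it below -/
import Mathlib

section
/- Let U' = {1,2,3,4} and 𝒞' = {∅, {1}, {2}, {3}, {4}, {1,2}, {1,4}, {2,3}, {3,4}, {1,2,3}, {2,3,4}}. Then (U', 𝒞') is a bouquet of convex geometries, but it is not an ideal of any convex geometry: there exist no finite set U with U' ⊆ U and no convex geometry 𝒞 on U with 𝒞' ⊆ 𝒞 such that every X ∈ 𝒞 with X ⊆ Y for some Y ∈ 𝒞' satisfies X ∈ 𝒞'. -/
open Finset

/-- A bouquet of convex geometries on the finite ground set `U`. -/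
def IsBouquetOn (U : Finset ℕ) (𝒞 : Set (Finset ℕ)) : Prop :=
  (∀ X ∈ 𝒞, X ⊆ U) ∧ (∅ : Finset ℕ) ∈ 𝒞 ∧
    (∀ X ∈ 𝒞, ∀ Y ∈ 𝒞, X ∩ Y ∈ 𝒞) ∧
    ∀ X ∈ 𝒞, ∀ Y ∈ 𝒞, Y ⊂ X → ∃ e ∈ X \ Y, insert e Y ∈ 𝒞

/-- A convex geometry on the finite ground set `U`. -/
def IsConvexGeometryOn (U : Finset ℕ) (𝒞 : Set (Finset ℕ)) : Prop :=
  (∀ X ∈ 𝒞, X ⊆ U) ∧ (∅ : Finset ℕ) ∈ 𝒞 ∧ U ∈ 𝒞 ∧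
    (∀ X ∈ 𝒞, ∀ Y ∈ 𝒞, X ∩ Y ∈ 𝒞) ∧
    ∀ X ∈ 𝒞, X ≠ U → ∃ e ∈ U \ X, insert e X ∈ 𝒞

/-- The family 𝒞' of the example. -/
def C' : Set (Finset ℕ) :=
  {∅, {1}, {2}, {3}, {4}, {1, 2}, {1, 4}, {2, 3}, {3, 4}, {1, 2, 3}, {2, 3, 4}}

/-- Finset version of `C'`. -/
def C'fin : Finset (Finset ℕ) :=
  {∅, {1}, {2}, {3}, {4}, {1, 2}, {1, 4}, {2, 3}, {3, 4}, {1, 2, 3}, {2, 3, 4}}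

lemma mem_C'_iff (X : Finset ℕ) : X ∈ C' ↔ X ∈ C'fin := by
  simp [C', C'fin]

lemma bouquet_fin :
    (∀ X ∈ C'fin, X ⊆ ({1, 2, 3, 4} : Finset ℕ)) ∧ (∅ : Finset ℕ) ∈ C'fin ∧
      (∀ X ∈ C'fin, ∀ Y ∈ C'fin, X ∩ Y ∈ C'fin) ∧
      ∀ X ∈ C'fin, ∀ Y ∈ C'fin, Y ⊂ X → ∃ e ∈ X \ Y, insert e Y ∈ C'fin := by
  decide

lemma factA_fin : ∀ W ∈ C'fin, 1 ∈ W → 3 ∈ W → 2 ∈ W := by decide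

lemma factB_fin : ∀ W ∈ C'fin, 2 ∈ W → 4 ∈ W → 3 ∈ W := by decide

/-- `({1,2,3,4}, 𝒞')` is a bouquet of convex geometries, but it is not an ideal
of any convex geometry. -/
theorem bouquet_not_ideal_of_convex_geometry :
    IsBouquetOn {1, 2, 3, 4} C' ∧
      ¬ ∃ (U : Finset ℕ) (𝒞 : Set (Finset ℕ)),
          ({1, 2, 3, 4} : Finset ℕ) ⊆ U ∧ IsConvexGeometryOn U 𝒞 ∧ C' ⊆ 𝒞 ∧
            ∀ X ∈ 𝒞, (∃ Y ∈ C', X ⊆ Y) → X ∈ C' := by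
  constructor
  · obtain ⟨h1, h2, h3, h4⟩ := bouquet_fin
    refine ⟨?_, ?_, ?_, ?_⟩
    · intro X hX; exact h1 X ((mem_C'_iff X).1 hX)
    · rw [mem_C'_iff]; exact h2
    · intro X hX Y hY
      rw [mem_C'_iff] at *
      exact h3 X hX Y hY
    · intro X hX Y hY hYX
      rw [mem_C'_iff] at hX hY
      obtain ⟨e, he, hins⟩ := h4 X hX Y hY hYX
      exact ⟨e, he, (mem_C'_iff _).2 hins⟩
  · rintro ⟨U, 𝒞, hU'U, ⟨hsubU, hempty, hUmem, hinter, hext⟩, hsub, hideal⟩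
    -- fact A : any member of 𝒞 containing 1 and 3 contains 2
    have h123 : ({1, 2, 3} : Finset ℕ) ∈ C' := by rw [mem_C'_iff]; decide
    have h234 : ({2, 3, 4} : Finset ℕ) ∈ C' := by rw [mem_C'_iff]; decide
    have factA : ∀ Z ∈ 𝒞, 1 ∈ Z → 3 ∈ Z → 2 ∈ Z := by
      intro Z hZ h1Z h3Z
      have hW : Z ∩ {1, 2, 3} ∈ 𝒞 := hinter Z hZ _ (hsub h123)
      have hW' : Z ∩ {1, 2, 3} ∈ C' :=
        hideal _ hW ⟨{1, 2, 3}, h123, inter_subset_right⟩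
      rw [mem_C'_iff] at hW'
      have h2 : 2 ∈ Z ∩ ({1, 2, 3} : Finset ℕ) := by
        refine factA_fin _ hW' ?_ ?_ <;> rw [mem_inter] <;>
          refine ⟨by assumption, by decide⟩
      exact (mem_inter.1 h2).1
    have factB : ∀ Z ∈ 𝒞, 2 ∈ Z → 4 ∈ Z → 3 ∈ Z := by
      intro Z hZ h2Z h4Z
      have hW : Z ∩ {2, 3, 4} ∈ 𝒞 := hinter Z hZ _ (hsub h234)
      have hW' : Z ∩ {2, 3, 4} ∈ C' :=
        hideal _ hW ⟨{2, 3, 4}, h234, inter_subset_right⟩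
      rw [mem_C'_iff] at hW'
      have h3 : 3 ∈ Z ∩ ({2, 3, 4} : Finset ℕ) := by
        refine factB_fin _ hW' ?_ ?_ <;> rw [mem_inter] <;>
          refine ⟨by assumption, by decide⟩
      exact (mem_inter.1 h3).1
    have h2U : (2 : ℕ) ∈ U := hU'U (by decide)
    have key : ∀ n : ℕ, ∀ Z ∈ 𝒞, (U \ Z).card ≤ n →
        1 ∈ Z → 4 ∈ Z → 2 ∉ Z → 3 ∉ Z → False := by
      intro n
      induction n with
      | zero =>
        intro Z hZ hcard h1Z h4Z h2Z h3Z
        have : U \ Z = ∅ := card_eq_zero.1 (Nat.le_zero.1 hcard)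
        have : U ⊆ Z := sdiff_eq_empty_iff_subset.1 this
        exact h2Z (this h2U)
      | succ n ih =>
        intro Z hZ hcard h1Z h4Z h2Z h3Z
        have hne : Z ≠ U := by rintro rfl; exact h2Z h2U
        obtain ⟨e, he, hins⟩ := hext Z hZ hne
        rw [mem_sdiff] at he
        by_cases he2 : e = 2
        · subst he2
          have := factB _ hins (mem_insert_self _ _) (mem_insert_of_mem h4Z)
          rcases mem_insert.1 this with h | h
          · exact absurd h (by decide)
          · exact h3Z h
        · by_cases he3 : e = 3
          · subst he3
            have := factA _ hins (mem_insert_of_mem h1Z) (mem_insert_self _ _)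
            rcases mem_insert.1 this with h | h
            · exact absurd h (by decide)
            · exact h2Z h
          · have hssub : U \ insert e Z ⊂ U \ Z := by
              refine Finset.ssubset_iff_of_subset
                (sdiff_subset_sdiff (le_refl U) (subset_insert _ _)) |>.2 ?_
              exact ⟨e, by simp [mem_sdiff, he.1, he.2], by simp⟩
            have : (U \ insert e Z).card < (U \ Z).card := card_lt_card hssub
            refine ih (insert e Z) hins (by omega)
              (mem_insert_of_mem h1Z) (mem_insert_of_mem h4Z) ?_ ?_
            · intro h; rcases mem_insert.1 h with h | h
              exacts [he2 h.symm, h2Z h]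
            · intro h; rcases mem_insert.1 h with h | h
              exacts [he3 h.symm, h3Z h]
    have h14 : ({1, 4} : Finset ℕ) ∈ C' := by rw [mem_C'_iff]; decide
    exact key (U \ {1, 4}).card {1, 4} (hsub h14) le_rfl (by decide) (by decide)
      (by decide) (by decide)
end

section
/- Let 𝒮 be a family of subsets of a finite set U that is realizable in ℝ^d. Then the VC-dimension of 𝒮 is at most d: every subset A ⊆ U shattered by 𝒮 satisfies |A| ≤ d. Moreover, if 𝒮 is realizable in ℝ^d for some d, then 𝒮 is realizable in ℝ^{|U|}; hence for every realizable family, VC-dimension ≤ Euclidean dimension ≤ |U|. -/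
open Finset

/-- Realizability of a set family in `ℝ^d` by an arrangement of affine hyperplanes
restricted to an open convex set. -/
def IsRealizable {α : Type*} [Fintype α] (𝒮 : Set (Finset α)) (d : ℕ) : Prop :=
  ∃ (a : α → Fin d → ℝ) (b : α → ℝ) (K : Set (Fin d → ℝ)),
    IsOpen K ∧ Convex ℝ K ∧
      ∀ X : Finset α, X ∈ 𝒮 ↔ ∃ x ∈ K,
        (∀ e ∈ X, 0 < (∑ i, a e i * x i) + b e) ∧
        ∀ e ∉ X, (∑ i, a e i * x i) + b e < 0

/-- `𝒮` shatters the set `A`. -/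
def Shatters {α : Type*} [DecidableEq α] (𝒮 : Set (Finset α)) (A : Finset α) : Prop :=
  ∀ B ⊆ A, ∃ X ∈ 𝒮, X ∩ A = B


lemma part1_aux {α : Type*} [Fintype α] [DecidableEq α]
    (𝒮 : Set (Finset α)) {d : ℕ} (a : α → Fin d → ℝ) (b : α → ℝ)
    (K : Set (Fin d → ℝ))
    (hiff : ∀ X : Finset α, X ∈ 𝒮 ↔ ∃ x ∈ K,
        (∀ e ∈ X, 0 < (∑ i, a e i * x i) + b e) ∧
        ∀ e ∉ X, (∑ i, a e i * x i) + b e < 0)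
    (A : Finset α) (hS : Shatters 𝒮 A)
    (μ : α → ℝ)
    (hsum : ∑ e ∈ A, μ e • a e = 0)
    (hc : 0 ≤ ∑ e ∈ A, μ e * b e) :
    ∀ e ∈ A, μ e = 0 := by
  by_contra hne
  push_neg at hne
  obtain ⟨e0, he0A, he0⟩ := hne
  obtain ⟨X, hX, hXA⟩ := hS (A.filter fun e => μ e < 0) (filter_subset _ _)
  obtain ⟨x, hxK, hpos, hneg⟩ := (hiff X).1 hX
  have key : ∀ e ∈ A, μ e ≠ 0 → μ e * ((∑ i, a e i * x i) + b e) < 0 := by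
    intro e heA hμ
    rcases lt_or_gt_of_ne hμ with hlt | hgt
    · have heB : e ∈ A.filter fun e => μ e < 0 := mem_filter.2 ⟨heA, hlt⟩
      rw [← hXA] at heB
      have := hpos e (mem_inter.1 heB).1
      exact mul_neg_of_neg_of_pos hlt this
    · have heB : e ∉ A.filter fun e => μ e < 0 := by
        simp [mem_filter, not_lt.2 hgt.le]
      rw [← hXA] at heB
      have heX : e ∉ X := fun hx => heB (mem_inter.2 ⟨hx, heA⟩)
      exact mul_neg_of_pos_of_neg hgt (hneg e heX)
  have key' : ∀ e ∈ A, μ e * ((∑ i, a e i * x i) + b e) ≤ 0 := by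
    intro e heA
    by_cases hμ : μ e = 0
    · simp [hμ]
    · exact (key e heA hμ).le
  have hlt : ∑ e ∈ A, μ e * ((∑ i, a e i * x i) + b e) < ∑ e ∈ A, (0 : ℝ) :=
    Finset.sum_lt_sum key' ⟨e0, he0A, key e0 he0A he0⟩
  have h1 : ∀ i, ∑ e ∈ A, μ e * a e i = 0 := by
    intro i
    have := congrFun hsum i
    simpa [Finset.sum_apply] using this
  have expand : ∑ e ∈ A, μ e * ((∑ i, a e i * x i) + b e)
      = (∑ i, (∑ e ∈ A, μ e * a e i) * x i) + ∑ e ∈ A, μ e * b e := by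
    simp only [mul_add, Finset.sum_add_distrib, Finset.mul_sum, Finset.sum_mul]
    congr 1
    rw [Finset.sum_comm]
    refine Finset.sum_congr rfl fun i _ => Finset.sum_congr rfl fun e _ => by ring
  rw [expand] at hlt
  simp only [h1, zero_mul, Finset.sum_const_zero, zero_add] at hlt
  linarith

lemma part1 {α : Type*} [Fintype α] [DecidableEq α]
    (𝒮 : Set (Finset α)) {d : ℕ} (a : α → Fin d → ℝ) (b : α → ℝ)
    (K : Set (Fin d → ℝ))
    (hiff : ∀ X : Finset α, X ∈ 𝒮 ↔ ∃ x ∈ K,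
        (∀ e ∈ X, 0 < (∑ i, a e i * x i) + b e) ∧
        ∀ e ∉ X, (∑ i, a e i * x i) + b e < 0)
    (A : Finset α) (hS : Shatters 𝒮 A) : A.card ≤ d := by
  by_contra hd
  push_neg at hd
  have hA : ¬ LinearIndependent ℝ (fun e : {x // x ∈ A} => a ↑e) := by
    intro hli
    have := hli.fintype_card_le_finrank
    rw [Fintype.card_coe, Module.finrank_pi] at this
    simp at this
    omega
  obtain ⟨g, hgsum, i0, hi0⟩ := Fintype.not_linearIndependent_iff.mp hA
  classical
  set μ : α → ℝ := fun e => if h : e ∈ A then g ⟨e, h⟩ else 0 with hμdef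
  have hμA : ∀ (e : {x // x ∈ A}), μ ↑e = g e := fun e => by
    simp [hμdef, e.2]
  have hsum : ∑ e ∈ A, μ e • a e = 0 := by
    rw [← Finset.sum_attach A (fun e => μ e • a e)]
    rw [show ∑ e ∈ A.attach, μ ↑e • a ↑e = ∑ e ∈ A.attach, g e • a ↑e from
      Finset.sum_congr rfl fun e _ => by rw [hμA]]
    rw [← Finset.univ_eq_attach]
    exact hgsum
  have hμi0 : μ ↑i0 ≠ 0 := by rw [hμA]; exact hi0
  rcases le_or_gt 0 (∑ e ∈ A, μ e * b e) with hc | hc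
  · exact hμi0 (part1_aux 𝒮 a b K hiff A hS μ hsum hc i0 i0.2)
  · have hsum' : ∑ e ∈ A, (-μ) e • a e = 0 := by
      simp only [Pi.neg_apply, neg_smul, Finset.sum_neg_distrib]
      rw [hsum]; simp
    have hc' : 0 ≤ ∑ e ∈ A, (-μ) e * b e := by
      simp only [Pi.neg_apply, neg_mul, Finset.sum_neg_distrib]
      linarith
    have := part1_aux 𝒮 a b K hiff A hS (-μ) hsum' hc' i0 i0.2
    simp only [Pi.neg_apply, neg_eq_zero] at this
    exact hμi0 this

lemma part2 {α : Type*} [Fintype α] [DecidableEq α]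
    (𝒮 : Set (Finset α)) (d : ℕ) (h : IsRealizable 𝒮 d) :
    IsRealizable 𝒮 (Fintype.card α) := by
  classical
  obtain ⟨a, b, K, hKo, hKc, hiff⟩ := h
  set n := Fintype.card α with hn
  let eqv : Fin n ≃ α := (Fintype.equivFin α).symm
  -- the linear functional x ↦ ∑ i, a e i * x i
  let aL : α → ((Fin d → ℝ) →ₗ[ℝ] ℝ) := fun e =>
    { toFun := fun x => ∑ i, a e i * x i
      map_add' := fun x y => by
        simp [mul_add, Finset.sum_add_distrib]
      map_smul' := fun c x => by
        simp [Finset.mul_sum]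
        exact Finset.sum_congr rfl fun i _ => by ring }
  let L : (Fin d → ℝ) →ₗ[ℝ] (Fin n → ℝ) := LinearMap.pi (fun j => aL (eqv j))
  have hkerL : ∀ e, LinearMap.ker L ≤ LinearMap.ker (aL e) := by
    intro e z hz
    have := congrFun (show L z = 0 from hz) (eqv.symm e)
    simpa [L] using this
  set V := LinearMap.range L with hV
  obtain ⟨W, hVW⟩ := V.exists_isCompl
  let π : (Fin n → ℝ) →ₗ[ℝ] V := V.linearProjOfIsCompl W hVW
  obtain ⟨s, hs⟩ := L.rangeRestrict.exists_rightInverse_of_surjective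
    (LinearMap.range_eq_top.2 L.surjective_rangeRestrict)
  let φ : α → ((Fin n → ℝ) →ₗ[ℝ] ℝ) := fun e => ((aL e).comp s).comp π
  -- key facts
  have hLs : ∀ v : V, L (s v) = ↑v := by
    intro v
    have := congrFun (congrArg (fun f => f.toFun) hs) v
    simpa [LinearMap.rangeRestrict] using congrArg Subtype.val this
  have hkey1 : ∀ e x, φ e (L x) = aL e x := by
    intro e x
    have hmem : L x ∈ V := ⟨x, rfl⟩
    have hπ : π (L x) = ⟨L x, hmem⟩ :=
      Submodule.linearProjOfIsCompl_apply_left hVW ⟨L x, hmem⟩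
    have hker : s ⟨L x, hmem⟩ - x ∈ LinearMap.ker L := by
      rw [LinearMap.mem_ker, map_sub, hLs ⟨L x, hmem⟩, sub_self]
    have := hkerL e hker
    rw [LinearMap.mem_ker, map_sub, sub_eq_zero] at this
    simp only [φ, LinearMap.comp_apply, hπ]
    exact this
  have hkey2 : ∀ e (w : W), φ e ↑w = 0 := by
    intro e w
    have hπ : π ↑w = 0 := Submodule.linearProjOfIsCompl_apply_right hVW w
    simp [φ, hπ]
  -- the map T
  let T : ((Fin d → ℝ) × W) →ₗ[ℝ] (Fin n → ℝ) := L.coprod W.subtype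
  have hTsurj : Function.Surjective T := by
    intro y
    have hy : y ∈ V ⊔ W := by rw [hVW.sup_eq_top]; trivial
    obtain ⟨v, hv, w, hw, hvw⟩ := Submodule.mem_sup.1 hy
    obtain ⟨x, hx⟩ := hv
    exact ⟨(x, ⟨w, hw⟩), by simp [T, hx, hvw]⟩
  let Tc : ((Fin d → ℝ) × W) →L[ℝ] (Fin n → ℝ) := LinearMap.toContinuousLinearMap T
  set K' : Set (Fin n → ℝ) := T '' (K ×ˢ (Set.univ : Set W)) with hK'
  have hK'o : IsOpen K' := by
    have := ContinuousLinearMap.isOpenMap Tc hTsurj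
    exact this _ (hKo.prod isOpen_univ)
  have hK'c : Convex ℝ K' := (hKc.prod convex_univ).linear_image T
  refine ⟨fun e i => φ e (Pi.single i 1), b, K', hK'o, hK'c, ?_⟩
  have hφsum : ∀ e (y : Fin n → ℝ), (∑ i, φ e (Pi.single i 1) * y i) = φ e y := by
    intro e y
    rw [LinearMap.pi_apply_eq_sum_univ (φ e) y]
    refine Finset.sum_congr rfl fun i _ => ?_
    rw [smul_eq_mul, mul_comm]
    congr 1
    congr 1
    ext j
    simp [Pi.single_apply, eq_comm]
  intro X
  rw [hiff X]
  constructor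
  · rintro ⟨x, hxK, hpos, hneg⟩
    refine ⟨T (x, 0), ⟨(x, 0), ⟨hxK, trivial⟩, rfl⟩, ?_, ?_⟩
    · intro e he
      rw [hφsum]
      have : T (x, (0 : W)) = L x := by simp [T]
      rw [this, hkey1]
      exact hpos e he
    · intro e he
      rw [hφsum]
      have : T (x, (0 : W)) = L x := by simp [T]
      rw [this, hkey1]
      exact hneg e he
  · rintro ⟨y, ⟨⟨x, w⟩, ⟨hxK, -⟩, rfl⟩, hpos, hneg⟩
    refine ⟨x, hxK, ?_, ?_⟩
    · intro e he
      have := hpos e he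
      rw [hφsum] at this
      have hTy : T (x, w) = L x + ↑w := by simp [T]
      rw [hTy, map_add, hkey1, hkey2, add_zero] at this
      exact this
    · intro e he
      have := hneg e he
      rw [hφsum] at this
      have hTy : T (x, w) = L x + ↑w := by simp [T]
      rw [hTy, map_add, hkey1, hkey2, add_zero] at this
      exact this

/-- For a family realizable in `ℝ^d`: the VC-dimension is at most `d`, and the
family is realizable in `ℝ^{|U|}`; hence VC-dimension ≤ Euclidean dimension ≤ |U|. -/
theorem vcdim_le_edim_le_card {α : Type*} [Fintype α] [DecidableEq α]
    (𝒮 : Set (Finset α)) (d : ℕ) (h : IsRealizable 𝒮 d) :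
    (∀ A : Finset α, Shatters 𝒮 A → A.card ≤ d) ∧
      IsRealizable 𝒮 (Fintype.card α) := by
  refine ⟨?_, part2 𝒮 d h⟩
  obtain ⟨a, b, K, -, -, hiff⟩ := h
  exact fun A hA => part1 𝒮 a b K hiff A hA
end

section
/- Let (U', 𝒞') be an ideal of a convex geometry (U, 𝒞). Then 𝒞' = {X ∈ 𝒞 : for every positive circuit P of 𝒞' (with respect to 𝒞), P ⊈ X}. -/
open Finset

/-- A convex geometry on the finite ground set `α` (the universe `U` is all of `α`). -/
def IsConvexGeometry {α : Type*} [Fintype α] [DecidableEq α] (𝒞 : Set (Finset α)) : Prop :=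
  (∅ : Finset α) ∈ 𝒞 ∧ (univ : Finset α) ∈ 𝒞 ∧
    (∀ X ∈ 𝒞, ∀ Y ∈ 𝒞, X ∩ Y ∈ 𝒞) ∧
    ∀ X ∈ 𝒞, X ≠ univ → ∃ e ∉ X, insert e X ∈ 𝒞

/-- `P` is a positive circuit of `𝒞'`: the trace of `𝒞'` on `P` is `2^P \ {P}`. -/
def IsPositiveCircuit {α : Type*} [DecidableEq α] (𝒞' : Set (Finset α)) (P : Finset α) : Prop :=
  {Y : Finset α | ∃ X ∈ 𝒞', X ∩ P = Y} = {Y : Finset α | Y ⊆ P ∧ Y ≠ P}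

/-- If `X ∈ 𝒞 \ 𝒞'`, then `X` contains a positive circuit of `𝒞'`. -/
theorem exists_positive_circuit_of_not_mem
    {α : Type*} [Fintype α] [DecidableEq α] (𝒞 𝒞' : Set (Finset α))
    (hC2 : ∀ X ∈ 𝒞, ∀ Y ∈ 𝒞, X ∩ Y ∈ 𝒞) (hsub : 𝒞' ⊆ 𝒞)
    (hideal : ∀ X ∈ 𝒞, (∃ Y ∈ 𝒞', X ⊆ Y) → X ∈ 𝒞')
    (X : Finset α) (hXC : X ∈ 𝒞) (hX : X ∉ 𝒞') :
    ∃ P ⊆ X, IsPositiveCircuit 𝒞' P := by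
  classical
  set t : Finset (Finset α) :=
    X.powerset.filter (fun P => ∀ Z ∈ 𝒞', ¬ P ⊆ Z) with ht
  have htne : t.Nonempty := by
    refine ⟨X, ?_⟩
    simp only [ht, mem_filter, mem_powerset]
    exact ⟨subset_rfl, fun Z hZ hXZ => hX (hideal X hXC ⟨Z, hZ, hXZ⟩)⟩
  obtain ⟨P, hPt, hmin⟩ := Finset.exists_min_image t Finset.card htne
  rw [ht, mem_filter, mem_powerset] at hPt
  obtain ⟨hPX, hPavoid⟩ := hPt
  refine ⟨P, hPX, ?_⟩
  -- key: every proper subset of P is an exact trace of 𝒞' on P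
  have key : ∀ n : ℕ, ∀ Y : Finset α, Y ⊆ P → Y ≠ P → (P \ Y).card = n →
      ∃ Z ∈ 𝒞', Z ∩ P = Y := by
    intro n
    induction n using Nat.strong_induction_on with
    | _ n ih =>
      intro Y hYP hYne hcard
      have hne : (P \ Y).Nonempty := by
        rw [sdiff_nonempty]
        intro h
        exact hYne (subset_antisymm hYP h)
      obtain ⟨p, hp⟩ := hne
      have hpP : p ∈ P := (mem_sdiff.mp hp).1
      have hpY : p ∉ Y := (mem_sdiff.mp hp).2
      by_cases hq : ∃ q ∈ P \ Y, q ≠ p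
      · -- at least two missing elements: intersect two exact traces
        obtain ⟨q, hq', hqp⟩ := hq
        have hqP : q ∈ P := (mem_sdiff.mp hq').1
        have hqY : q ∉ Y := (mem_sdiff.mp hq').2
        have hstep : ∀ a ∈ P \ Y, (P \ insert a Y).card < n := by
          intro a ha
          have : P \ insert a Y ⊂ P \ Y := by
            rw [Finset.ssubset_iff_of_subset
              (sdiff_subset_sdiff subset_rfl (subset_insert a Y))]
            exact ⟨a, ha, by simp⟩
          calc (P \ insert a Y).card < (P \ Y).card := Finset.card_lt_card this
            _ = n := hcard
        have hins : ∀ a ∈ P \ Y, insert a Y ≠ P := by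
          intro a ha hcontra
          -- then P \ insert a Y = ∅, fine, but we need ≠ P only to apply ih;
          -- contradiction with existence of two distinct missing elements handled below
          exact absurd hcontra (by
            intro h
            -- derive contradiction: both p and q are in P \ Y and distinct
            have : P \ Y ⊆ {a} := by
              intro b hb
              have hbP := (mem_sdiff.mp hb).1
              have hbY := (mem_sdiff.mp hb).2
              rw [← h] at hbP
              rcases mem_insert.mp hbP with h1 | h1
              · simp [h1]
              · exact absurd h1 hbY
            have h1 := this hp
            have h2 := this hq'
            simp only [mem_singleton] at h1 h2
            exact hqp (h2.trans h1.symm))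
        obtain ⟨Zp, hZp, hZpP⟩ := ih _ (hstep p hp) (insert p Y)
          (insert_subset hpP hYP) (hins p hp) rfl
        obtain ⟨Zq, hZq, hZqP⟩ := ih _ (hstep q hq') (insert q Y)
          (insert_subset hqP hYP) (hins q hq') rfl
        refine ⟨Zp ∩ Zq, hideal _ (hC2 _ (hsub hZp) _ (hsub hZq))
          ⟨Zp, hZp, inter_subset_left⟩, ?_⟩
        have : Zp ∩ Zq ∩ P = (Zp ∩ P) ∩ (Zq ∩ P) := by
          ext a; simp only [mem_inter]; tauto
        rw [this, hZpP, hZqP]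
        ext a
        simp only [mem_inter, mem_insert]
        constructor
        · rintro ⟨h1 | h1, h2 | h2⟩
          · exact absurd (h1.symm.trans h2) hqp.symm
          · exact h2
          · exact h1
          · exact h1
        · exact fun h => ⟨Or.inr h, Or.inr h⟩
      · -- exactly one missing element p : use minimality of P
        push_neg at hq
        have hPY : P \ Y = {p} := by
          apply subset_antisymm
          · intro b hb
            simp only [mem_singleton]
            exact hq b hb
          · simp [hp]
        have hYnotint : Y ∉ t := by
          intro hYt
          have := hmin Y hYt
          have hlt : Y.card < P.card := Finset.card_lt_card ⟨hYP, fun h => hYne (subset_antisymm hYP h)⟩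
          omega
        have hYX : Y ⊆ X := hYP.trans hPX
        rw [ht, mem_filter, mem_powerset] at hYnotint
        push_neg at hYnotint
        obtain ⟨Z, hZ, hYZ⟩ := hYnotint hYX
        refine ⟨Z, hZ, ?_⟩
        apply subset_antisymm
        · intro a ha
          have haZ := (mem_inter.mp ha).1
          have haP := (mem_inter.mp ha).2
          by_contra haY
          have : a ∈ P \ Y := mem_sdiff.mpr ⟨haP, haY⟩
          rw [hPY, mem_singleton] at this
          subst this
          -- then P ⊆ Z, contradiction
          apply hPavoid Z hZ
          intro b hb
          by_cases hbY : b ∈ Y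
          · exact hYZ hbY
          · have : b ∈ P \ Y := mem_sdiff.mpr ⟨hb, hbY⟩
            rw [hPY, mem_singleton] at this
            subst this
            exact haZ
        · exact subset_inter hYZ hYP
  -- now assemble the circuit property
  unfold IsPositiveCircuit
  ext Y
  simp only [Set.mem_setOf_eq]
  constructor
  · rintro ⟨Z, hZ, rfl⟩
    refine ⟨inter_subset_right, fun h => ?_⟩
    exact hPavoid Z hZ (by rw [← Finset.inter_eq_right, h])
  · rintro ⟨hYP, hYne⟩
    exact key _ Y hYP hYne rfl

/-- For an ideal `𝒞'` of a convex geometry `𝒞`, `𝒞'` consists exactly of the members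
of `𝒞` containing no positive circuit. -/
theorem ideal_eq_members_without_positive_circuit
    {α : Type*} [Fintype α] [DecidableEq α] (𝒞 𝒞' : Set (Finset α))
    (hCG : IsConvexGeometry 𝒞) (hsub : 𝒞' ⊆ 𝒞)
    (hideal : ∀ X ∈ 𝒞, (∃ Y ∈ 𝒞', X ⊆ Y) → X ∈ 𝒞') :
    𝒞' = {X ∈ 𝒞 | ∀ P : Finset α, IsPositiveCircuit 𝒞' P → ¬ P ⊆ X} := by
  obtain ⟨-, -, hC2, -⟩ := hCG
  ext X
  simp only [Set.mem_setOf_eq]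
  constructor
  · intro hX
    refine ⟨hsub hX, fun P hP hPX => ?_⟩
    have hmem : P ∈ {Y : Finset α | ∃ Z ∈ 𝒞', Z ∩ P = Y} :=
      ⟨X, hX, Finset.inter_eq_right.mpr hPX⟩
    rw [show {Y : Finset α | ∃ Z ∈ 𝒞', Z ∩ P = Y} = {Y : Finset α | Y ⊆ P ∧ Y ≠ P} from hP]
      at hmem
    exact hmem.2 rfl
  · rintro ⟨hXC, hnoc⟩
    by_contra hX
    obtain ⟨P, hPX, hPcirc⟩ :=
      exists_positive_circuit_of_not_mem 𝒞 𝒞' hC2 hsub hideal X hXC hX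
    exact hnoc P hPcirc hPX
end

section
/- Let (U, 𝒞) be a convex geometry and let 𝒞* = 2^U \ 𝒞 be its complement. For disjoint sets Y, X ⊆ U, let Q(Y, X) = {Y ∪ X' : X' ⊆ X}. If Q(Y, X) ⊆ 𝒞* and Q(Y, X) is maximal under inclusion among all such cubes contained in 𝒞*, then there exists a rooted circuit (C, r) of 𝒞 with Y = C \ {r} and X = U \ C. -/
open Finset

/-- `(C, r)` is a rooted circuit of `𝒞`: `r ∈ C` and the trace of `𝒞` on `C` is
`2^C \ {C \ {r}}`. -/
def IsRootedCircuit {α : Type*} [DecidableEq α] (𝒞 : Set (Finset α)) (C : Finset α)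
    (r : α) : Prop :=
  r ∈ C ∧ {Y : Finset α | ∃ X ∈ 𝒞, X ∩ C = Y} = {Y : Finset α | Y ⊆ C ∧ Y ≠ C.erase r}

/-- The cube `Q(Y, X) = {Y ∪ X' : X' ⊆ X}` of subsets of the universe. -/
def Cube {α : Type*} [DecidableEq α] (Y X : Finset α) : Set (Finset α) :=
  {Z | ∃ X' ⊆ X, Z = Y ∪ X'}

section Aux
variable {α : Type*} [Fintype α] [DecidableEq α]

lemma mem_cube_iff {Y X Z : Finset α} : Z ∈ Cube Y X ↔ Y ⊆ Z ∧ Z ⊆ Y ∪ X := by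
  constructor
  · rintro ⟨X', hX', rfl⟩
    exact ⟨subset_union_left, union_subset_union_right hX'⟩
  · rintro ⟨h1, h2⟩
    refine ⟨Z \ Y, ?_, ?_⟩
    · intro a ha
      rcases mem_sdiff.1 ha with ⟨haZ, haY⟩
      rcases mem_union.1 (h2 haZ) with h | h
      · exact absurd h haY
      · exact h
    · rw [union_sdiff_self_eq_union, union_eq_right.2 h1]

open Classical in
noncomputable def clos (𝒞 : Set (Finset α)) (S : Finset α) : Finset α :=
  ((univ : Finset (Finset α)).filter fun T => T ∈ 𝒞 ∧ S ⊆ T).inf id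

open Classical in
lemma subset_clos (𝒞 : Set (Finset α)) (S : Finset α) : S ⊆ clos 𝒞 S := by
  rw [← le_iff_subset]
  apply Finset.le_inf
  intro T hT
  exact le_iff_subset.2 (mem_filter.1 hT).2.2

open Classical in
lemma clos_subset {𝒞 : Set (Finset α)} {S T : Finset α} (hT : T ∈ 𝒞) (hS : S ⊆ T) :
    clos 𝒞 S ⊆ T :=
  le_iff_subset.1 (Finset.inf_le (mem_filter.2 ⟨mem_univ _, hT, hS⟩))

open Classical in
lemma clos_mono {𝒞 : Set (Finset α)} {S₁ S₂ : Finset α} (h : S₁ ⊆ S₂) :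
    clos 𝒞 S₁ ⊆ clos 𝒞 S₂ := by
  rw [← le_iff_subset]
  apply Finset.le_inf
  intro T hT
  rcases mem_filter.1 hT with ⟨-, hT𝒞, hsub⟩
  exact Finset.inf_le (mem_filter.2 ⟨mem_univ _, hT𝒞, h.trans hsub⟩)

lemma inf_mem_of {𝒞 : Set (Finset α)} (hi : ∀ A ∈ 𝒞, ∀ B ∈ 𝒞, A ∩ B ∈ 𝒞) :
    ∀ ℱ : Finset (Finset α), ℱ.Nonempty → (∀ T ∈ ℱ, T ∈ 𝒞) → ℱ.inf id ∈ 𝒞 := by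
  intro ℱ
  induction ℱ using Finset.induction_on with
  | empty => rintro ⟨x, hx⟩; simp at hx
  | @insert a s ha ih =>
    intro _ hall
    rcases s.eq_empty_or_nonempty with rfl | hs
    · simpa using hall a (by simp)
    · rw [Finset.inf_insert]
      have h1 : s.inf id ∈ 𝒞 := ih hs fun T hT => hall T (by simp [hT])
      have h2 := hi a (hall a (by simp)) _ h1
      simpa [inf_eq_inter] using h2

open Classical in
lemma clos_mem {𝒞 : Set (Finset α)} (hCG : IsConvexGeometry 𝒞) (S : Finset α) :
    clos 𝒞 S ∈ 𝒞 := by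
  apply inf_mem_of hCG.2.2.1
  · exact ⟨univ, mem_filter.2 ⟨mem_univ _, hCG.2.1, subset_univ _⟩⟩
  · intro T hT; exact (mem_filter.1 hT).2.1

lemma ext_step {𝒞 : Set (Finset α)} (hCG : IsConvexGeometry 𝒞) :
    ∀ (n : ℕ) (D : Finset α), (univ \ D).card ≤ n → D ∈ 𝒞 → ∀ F ∈ 𝒞, ¬ F ⊆ D →
      ∃ e ∈ F, e ∉ D ∧ insert e (D ∩ F) ∈ 𝒞 := by
  intro n
  induction n with
  | zero =>
    intro D hcard hD F hF hFD
    exfalso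
    apply hFD
    have : univ \ D = ∅ := card_eq_zero.1 (Nat.le_zero.1 hcard)
    have hDu : D = univ := by
      rw [← sdiff_eq_empty_iff_subset] at *
      exact subset_antisymm (subset_univ _) (sdiff_eq_empty_iff_subset.1 this)
    rw [hDu]; exact subset_univ _
  | succ n ih =>
    intro D hcard hD F hF hFD
    have hDu : D ≠ univ := fun h => hFD (h ▸ subset_univ F)
    obtain ⟨e₀, he₀, hins⟩ := hCG.2.2.2 D hD hDu
    by_cases h : e₀ ∈ F
    · refine ⟨e₀, h, he₀, ?_⟩
      have := hCG.2.2.1 (insert e₀ D) hins F hF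
      rwa [insert_inter_of_mem h] at this
    · have hcard' : (univ \ insert e₀ D).card ≤ n := by
        rw [sdiff_insert]
        rw [card_erase_of_mem (mem_sdiff.2 ⟨mem_univ _, he₀⟩)]
        omega
      have hsub' : ¬ F ⊆ insert e₀ D := by
        intro hsub
        apply hFD
        intro a ha
        rcases mem_insert.1 (hsub ha) with rfl | h'
        · exact absurd ha h
        · exact h'
      obtain ⟨e, heF, heD, hmem⟩ := ih (insert e₀ D) hcard' hins F hF hsub'
      refine ⟨e, heF, fun hh => heD (mem_insert_of_mem hh), ?_⟩
      rwa [insert_inter_of_notMem h] at hmem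

open Classical in
lemma anti_exchange {𝒞 : Set (Finset α)} (hCG : IsConvexGeometry 𝒞) {S : Finset α}
    (hS : S ∈ 𝒞) {p q : α} (hpq : p ≠ q) (hp : p ∉ S) (hq : q ∉ S)
    (h1 : q ∈ clos 𝒞 (insert p S)) (h2 : p ∈ clos 𝒞 (insert q S)) : False := by
  set F := clos 𝒞 (insert p S) with hFdef
  have hF𝒞 : F ∈ 𝒞 := clos_mem hCG _
  have hpF : p ∈ F := subset_clos 𝒞 _ (mem_insert_self _ _)
  have hSF : S ⊆ F := (subset_insert _ _).trans (subset_clos 𝒞 _)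
  have hqSF : insert q S ⊆ F := insert_subset h1 hSF
  have hFq : clos 𝒞 (insert q S) ⊆ F := clos_subset hF𝒞 hqSF
  have hpF2 : p ∈ clos 𝒞 (insert q S) := h2
  -- maximal G
  set cand := (univ : Finset (Finset α)).filter
    (fun G => G ∈ 𝒞 ∧ S ⊆ G ∧ G ⊆ F ∧ p ∉ G ∧ q ∉ G) with hcand
  have hScand : S ∈ cand := mem_filter.2 ⟨mem_univ _, hS, subset_rfl, hSF, hp, hq⟩
  obtain ⟨G, hGcand, hGmax⟩ := Finset.exists_max_image cand card ⟨S, hScand⟩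
  rcases mem_filter.1 hGcand with ⟨-, hG𝒞, hSG, hGF, hpG, hqG⟩
  have hnsub : ¬ F ⊆ G := fun h => hpG (h hpF)
  obtain ⟨e, heF, heG, hmem⟩ := ext_step hCG (univ \ G).card G le_rfl hG𝒞 F hF𝒞 hnsub
  rw [inter_eq_left.2 hGF] at hmem
  by_cases hep : e = p
  · subst hep
    have : F ⊆ insert e G := clos_subset hmem (insert_subset_insert _ hSG)
    rcases mem_insert.1 (this h1) with h | h
    · exact hpq h.symm
    · exact hqG h
  · by_cases heq : e = q
    · subst heq
      have hsub2 : clos 𝒞 (insert e S) ⊆ insert e G :=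
        clos_subset hmem (insert_subset_insert _ hSG)
      rcases mem_insert.1 (hsub2 hpF2) with h | h
      · exact hpq h
      · exact hpG h
    · have : insert e G ∈ cand := mem_filter.2 ⟨mem_univ _, hmem,
        hSG.trans (subset_insert _ _), insert_subset heF hGF,
        fun h => (mem_insert.1 h).elim (fun h' => hep h'.symm) hpG,
        fun h => (mem_insert.1 h).elim (fun h' => heq h'.symm) hqG⟩
      have := hGmax _ this
      have : G.card < (insert e G).card := by
        rw [card_insert_of_notMem heG]; omega
      omega

end Aux

/-- Every inclusion-maximal cube contained in the complement of a convex geometry comes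
from a rooted circuit. -/
theorem maximal_cube_of_complement_is_rooted_circuit
    {α : Type*} [Fintype α] [DecidableEq α] (𝒞 : Set (Finset α))
    (hCG : IsConvexGeometry 𝒞) (Y X : Finset α) (hdisj : Disjoint Y X)
    (hcompl : ∀ Z ∈ Cube Y X, Z ∉ 𝒞)
    (hmax : ∀ Y₂ X₂ : Finset α, Disjoint Y₂ X₂ → Cube Y X ⊆ Cube Y₂ X₂ →
      (∀ Z ∈ Cube Y₂ X₂, Z ∉ 𝒞) → Cube Y₂ X₂ = Cube Y X) :
    ∃ (C : Finset α) (r : α), IsRootedCircuit 𝒞 C r ∧ Y = C.erase r ∧ X = univ \ C := by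
  classical
  have huniv := hCG.2.1
  have hinter := hCG.2.2.1
  have hYX : Y ∪ X ≠ univ := by
    intro h
    exact hcompl univ ⟨X, subset_rfl, h.symm⟩ huniv
  -- extension in the `t` direction
  have hA : ∀ t, t ∉ Y ∪ X → ∃ A ∈ 𝒞, Y ⊆ A ∧ A ⊆ Y ∪ insert t X ∧ t ∈ A := by
    intro t ht
    have htY : t ∉ Y := fun h => ht (mem_union_left _ h)
    by_contra hno
    push_neg at hno
    have hdisj' : Disjoint Y (insert t X) := by
      rw [disjoint_insert_right]; exact ⟨htY, hdisj⟩
    have hsub : Cube Y X ⊆ Cube Y (insert t X) := by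
      rintro Z ⟨X', hX', rfl⟩
      exact ⟨X', hX'.trans (subset_insert _ _), rfl⟩
    have hcompl' : ∀ Z ∈ Cube Y (insert t X), Z ∉ 𝒞 := by
      rintro Z hZ hZC
      rw [mem_cube_iff] at hZ
      obtain ⟨h1, h2⟩ := hZ
      by_cases htZ : t ∈ Z
      · exact hno Z hZC h1 h2 htZ
      · refine hcompl Z (mem_cube_iff.2 ⟨h1, fun a ha => ?_⟩) hZC
        rcases mem_union.1 (h2 ha) with h | h
        · exact mem_union_left _ h
        · rcases mem_insert.1 h with rfl | h
          · exact absurd ha htZ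
          · exact mem_union_right _ h
    have heq := hmax Y (insert t X) hdisj' hsub hcompl'
    have hmem : Y ∪ {t} ∈ Cube Y (insert t X) :=
      ⟨{t}, singleton_subset_iff.2 (mem_insert_self _ _), rfl⟩
    rw [heq, mem_cube_iff] at hmem
    exact ht (hmem.2 (mem_union_right _ (mem_singleton_self t)))
  have huniq : ∀ s t, s ∉ Y ∪ X → t ∉ Y ∪ X → s = t := by
    intro s t hs ht
    by_contra hst
    obtain ⟨A, hA𝒞, hYA, hAsub, hsA⟩ := hA s hs
    obtain ⟨B, hB𝒞, hYB, hBsub, htB⟩ := hA t ht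
    refine hcompl (A ∩ B) (mem_cube_iff.2 ⟨subset_inter hYA hYB, ?_⟩)
      (hinter A hA𝒞 B hB𝒞)
    intro a ha
    obtain ⟨haA, haB⟩ := mem_inter.1 ha
    rcases mem_union.1 (hAsub haA) with h | h
    · exact mem_union_left _ h
    · rcases mem_insert.1 h with rfl | h
      · rcases mem_union.1 (hBsub haB) with h' | h'
        · exact mem_union_left _ h'
        · rcases mem_insert.1 h' with rfl | h'
          · exact absurd rfl hst
          · exact mem_union_right _ h'
      · exact mem_union_right _ h
  obtain ⟨r, hr⟩ : ∃ r, r ∉ Y ∪ X := by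
    by_contra h
    push_neg at h
    exact hYX (eq_univ_iff_forall.2 h)
  have hcomp : ∀ a, a ∉ Y ∪ X → a = r := fun a ha => huniq a r ha hr
  have hrY : r ∉ Y := fun h => hr (mem_union_left _ h)
  have hrX : r ∉ X := fun h => hr (mem_union_right _ h)
  set C := insert r Y with hC
  have hYC : Y = C.erase r := by rw [hC, erase_insert hrY]
  have hXC : X = univ \ C := by
    ext a
    simp only [mem_sdiff, mem_univ, true_and, hC, mem_insert, not_or]
    constructor
    · intro ha
      exact ⟨fun h => hrX (h ▸ ha), fun h => disjoint_left.1 hdisj h ha⟩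
    · rintro ⟨har, haY⟩
      by_contra haX
      exact har (hcomp a (fun h => (mem_union.1 h).elim haY haX))
  obtain ⟨A, hA𝒞, hYA, hAsub, hrA⟩ := hA r hr
  have hCA : C ⊆ A := insert_subset hrA hYA
  -- extension in the `y` direction
  have hB : ∀ y ∈ Y, ∃ B ∈ 𝒞, Y.erase y ⊆ B ∧ B ⊆ (Y.erase y) ∪ X := by
    intro y hy
    by_contra hno
    push_neg at hno
    have hdisj' : Disjoint (Y.erase y) (insert y X) := by
      rw [disjoint_insert_right]
      exact ⟨notMem_erase _ _, disjoint_of_subset_left (erase_subset _ _) hdisj⟩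
    have hsub : Cube Y X ⊆ Cube (Y.erase y) (insert y X) := by
      rintro Z ⟨X', hX', rfl⟩
      refine ⟨insert y X', insert_subset_insert _ hX', ?_⟩
      conv_lhs => rw [← insert_erase hy]
      rw [insert_union, ← union_insert]
    have hcompl' : ∀ Z ∈ Cube (Y.erase y) (insert y X), Z ∉ 𝒞 := by
      rintro Z hZ hZ𝒞
      rw [mem_cube_iff] at hZ
      by_cases hyZ : y ∈ Z
      · refine hcompl Z (mem_cube_iff.2 ⟨?_, ?_⟩) hZ𝒞
        · intro a ha
          by_cases hay : a = y
          · exact hay ▸ hyZ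
          · exact hZ.1 (mem_erase.2 ⟨hay, ha⟩)
        · intro a ha
          rcases mem_union.1 (hZ.2 ha) with h | h
          · exact mem_union_left _ (erase_subset _ _ h)
          · rcases mem_insert.1 h with rfl | h
            · exact mem_union_left _ hy
            · exact mem_union_right _ h
      · refine hno Z hZ𝒞 hZ.1 ?_
        intro a ha
        rcases mem_union.1 (hZ.2 ha) with h | h
        · exact mem_union_left _ h
        · rcases mem_insert.1 h with rfl | h
          · exact absurd ha hyZ
          · exact mem_union_right _ h
    have heq := hmax _ _ hdisj' hsub hcompl'
    have hmem : Y.erase y ∈ Cube (Y.erase y) (insert y X) :=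
      ⟨∅, empty_subset _, (union_empty _).symm⟩
    rw [heq, mem_cube_iff] at hmem
    exact (notMem_erase y Y) (hmem.1 hy)
  -- r is in the closure of Y
  have hrclY : r ∈ clos 𝒞 Y := by
    by_contra h
    refine hcompl (clos 𝒞 Y) (mem_cube_iff.2 ⟨subset_clos _ _, fun a ha => ?_⟩)
      (clos_mem hCG _)
    by_contra haYX
    exact h ((hcomp a haYX) ▸ ha)
  refine ⟨C, r, ⟨mem_insert_self r Y, ?_⟩, hYC, hXC⟩
  ext W
  simp only [Set.mem_setOf_eq]
  constructor
  · rintro ⟨X₀, hX₀, rfl⟩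
    refine ⟨inter_subset_right, ?_⟩
    intro hEq
    rw [← hYC] at hEq
    refine hcompl X₀ (mem_cube_iff.2 ⟨?_, ?_⟩) hX₀
    · exact hEq ▸ inter_subset_left
    · intro a ha
      by_contra haYX
      have har : a = r := hcomp a haYX
      subst har
      have : a ∈ X₀ ∩ C := mem_inter.2 ⟨ha, mem_insert_self _ _⟩
      rw [hEq] at this
      exact hrY this
  · rintro ⟨hWC, hWne⟩
    rw [← hYC] at hWne
    by_cases hrW : r ∈ W
    · by_cases hWY : W.erase r = Y
      · have hWeq : W = C := by rw [← insert_erase hrW, hWY, hC]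
        exact ⟨A, hA𝒞, by rw [hWeq, inter_eq_right.2 hCA]⟩
      · refine ⟨clos 𝒞 W, clos_mem hCG _, ?_⟩
        refine Subset.antisymm ?_ (subset_inter (subset_clos _ _) hWC)
        intro a ha
        obtain ⟨hacl, haC⟩ := mem_inter.1 ha
        rcases mem_insert.1 haC with rfl | haY
        · exact hrW
        · by_contra haW
          obtain ⟨B, hB𝒞, hBsub1, hBsub2⟩ := hB a haY
          set S := clos 𝒞 (Y.erase a) with hSdef
          have hS𝒞 : S ∈ 𝒞 := clos_mem hCG _
          have hSB : S ⊆ B := clos_subset hB𝒞 hBsub1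
          have hout : ∀ b ∈ S, b ∈ Y.erase a ∪ X := fun b hb => hBsub2 (hSB hb)
          have haS : a ∉ S := by
            intro h
            rcases mem_union.1 (hout a h) with h' | h'
            · exact (notMem_erase _ _) h'
            · exact disjoint_left.1 hdisj haY h'
          have hrS : r ∉ S := by
            intro h
            rcases mem_union.1 (hout r h) with h' | h'
            · exact hrY (erase_subset _ _ h')
            · exact hrX h'
          have hra : r ≠ a := fun h => hrY (h ▸ haY)
          refine anti_exchange hCG hS𝒞 hra hrS haS ?_ ?_
          · -- a ∈ clos (insert r S)
            refine clos_mono ?_ hacl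
            intro w hw
            by_cases hwr : w = r
            · exact hwr ▸ mem_insert_self _ _
            · have hwY : w ∈ Y := (mem_insert.1 (hWC hw)).resolve_left hwr
              have hwa : w ≠ a := fun h => haW (h ▸ hw)
              exact mem_insert_of_mem (subset_clos 𝒞 _ (mem_erase.2 ⟨hwa, hwY⟩))
          · -- r ∈ clos (insert a S)
            refine clos_mono ?_ hrclY
            intro w hw
            by_cases hwa : w = a
            · exact hwa ▸ mem_insert_self _ _
            · exact mem_insert_of_mem (subset_clos 𝒞 _ (mem_erase.2 ⟨hwa, hw⟩))
    · have hWsubY : W ⊆ Y := by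
        intro a ha
        exact (mem_insert.1 (hWC ha)).resolve_left (by rintro rfl; exact hrW ha)
      have hWneY : W ≠ Y := fun h =>
        hWne (h ▸ rfl)
      refine ⟨clos 𝒞 W, clos_mem hCG _, ?_⟩
      refine Subset.antisymm ?_ (subset_inter (subset_clos _ _) hWC)
      intro a ha
      obtain ⟨hacl, haC⟩ := mem_inter.1 ha
      by_contra haW
      have key : ∀ y ∈ Y, y ∉ W → a ∉ (Y.erase y) ∪ X → False := by
        intro y hyY hyW hmem'
        obtain ⟨B, hB𝒞, hB1, hB2⟩ := hB y hyY
        have hWsub : W ⊆ Y.erase y := fun w hw =>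
          mem_erase.2 ⟨fun h => hyW (h ▸ hw), hWsubY hw⟩
        have : clos 𝒞 W ⊆ B := clos_subset hB𝒞 (hWsub.trans hB1)
        exact hmem' (hB2 (this hacl))
      rcases mem_insert.1 haC with rfl | haY
      · obtain ⟨y₀, hy₀Y, hy₀W⟩ : ∃ y₀ ∈ Y, y₀ ∉ W := by
          by_contra h
          push_neg at h
          exact hWneY (Subset.antisymm hWsubY h)
        refine key y₀ hy₀Y hy₀W ?_
        intro h
        rcases mem_union.1 h with h' | h'
        · exact hrY (erase_subset _ _ h')
        · exact hrX h'
      · refine key a haY haW ?_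
        intro h
        rcases mem_union.1 h with h' | h'
        · exact (notMem_erase _ _) h'
        · exact disjoint_left.1 hdisj haY h'
end

section
/- Let (U', 𝒞') be an ideal of a convex geometry (U, 𝒞) with n = |U|. Let ℛ₀ be the set of critical rooted circuits of 𝒞, let 𝒫 be the set of positive circuits of 𝒞' with respect to 𝒞, and let K₀ = (⋂_{(C,r) ∈ ℛ₀} K(C, r)) ∩ (⋂_{P ∈ 𝒫} K(P)). Then for every X ⊆ U: the orthant 𝒪(X) intersects K₀ if and only if X ∈ 𝒞'. -/
open Finset

/-- `(C, r)` is a critical rooted circuit: it is a rooted circuit and, for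
`D = conv(C)` (the smallest member of `𝒞` containing `C`), `D \ {r} ∉ 𝒞` while
`D \ {r, b} ∈ 𝒞` for every `b ∈ C \ {r}`. -/
def IsCriticalRootedCircuit {α : Type*} [DecidableEq α] (𝒞 : Set (Finset α))
    (C : Finset α) (r : α) : Prop :=
  IsRootedCircuit 𝒞 C r ∧
    ∃ D ∈ 𝒞, C ⊆ D ∧ (∀ D' ∈ 𝒞, C ⊆ D' → D ⊆ D') ∧
      D.erase r ∉ 𝒞 ∧ ∀ b ∈ C.erase r, (D.erase r).erase b ∈ 𝒞

/-- The open `X`-orthant of `ℝ^U`. -/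
def Orthant {α : Type*} (X : Finset α) : Set (α → ℝ) :=
  {x | (∀ e ∈ X, 0 < x e) ∧ ∀ e ∉ X, x e < 0}

/-- The open halfspace `K(C, r) = {x : n·x_r > Σ_{e ∈ C \ {r}} x_e}`, where `n = |U|`. -/
def Kcr {α : Type*} [Fintype α] [DecidableEq α] (C : Finset α) (r : α) : Set (α → ℝ) :=
  {x | (∑ e ∈ C.erase r, x e) < (Fintype.card α : ℝ) * x r}


set_option linter.unusedSectionVars false

section Aux

variable {α : Type*} [Fintype α] [DecidableEq α] {𝒞 : Set (Finset α)}

/-- closure operator of the convex geometry -/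
noncomputable def clo (𝒞 : Set (Finset α)) (A : Finset α) : Finset α :=
  @Finset.filter α (fun e => ∀ Z ∈ 𝒞, A ⊆ Z → e ∈ Z) (fun _ => Classical.propDecidable _) univ

lemma mem_clo {A : Finset α} {e : α} : e ∈ clo 𝒞 A ↔ ∀ Z ∈ 𝒞, A ⊆ Z → e ∈ Z := by
  simp [clo]

lemma subset_clo {A : Finset α} : A ⊆ clo 𝒞 A :=
  fun _ he => mem_clo.2 fun _ _ hAZ => hAZ he

lemma clo_subset {A Z : Finset α} (hZ : Z ∈ 𝒞) (hAZ : A ⊆ Z) : clo 𝒞 A ⊆ Z :=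
  fun _ he => mem_clo.1 he Z hZ hAZ

lemma clo_mono {A B : Finset α} (h : A ⊆ B) : clo 𝒞 A ⊆ clo 𝒞 B :=
  fun _ he => mem_clo.2 fun Z hZ hBZ => mem_clo.1 he Z hZ (h.trans hBZ)

lemma exists_inter (hC2 : ∀ X ∈ 𝒞, ∀ Y ∈ 𝒞, X ∩ Y ∈ 𝒞) :
    ∀ s : Finset (Finset α), s.Nonempty → (∀ Z ∈ s, Z ∈ 𝒞) →
      ∃ Z₀ ∈ 𝒞, ∀ e, e ∈ Z₀ ↔ ∀ Z ∈ s, e ∈ Z := by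
  intro s hs
  induction hs using Finset.Nonempty.cons_induction with
  | singleton a => intro h; exact ⟨a, h a (mem_singleton_self a), by simp⟩
  | cons a s ha hs ih =>
      intro h
      obtain ⟨Z₀, hZ₀, hiff⟩ := ih fun Z hZ => h Z (mem_cons_of_mem hZ)
      refine ⟨a ∩ Z₀, hC2 a (h a (mem_cons_self a s)) Z₀ hZ₀, fun e => ?_⟩
      simp only [mem_inter, hiff, mem_cons]
      constructor
      · rintro ⟨h1, h2⟩ Z (rfl | hZ)
        · exact h1
        · exact h2 Z hZ
      · intro hh; exact ⟨hh a (Or.inl rfl), fun Z hZ => hh Z (Or.inr hZ)⟩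

lemma clo_mem (hCG : IsConvexGeometry 𝒞) (A : Finset α) : clo 𝒞 A ∈ 𝒞 := by
  classical
  set s : Finset (Finset α) :=
    @Finset.filter (Finset α) (fun Z => Z ∈ 𝒞 ∧ A ⊆ Z) (fun _ => Classical.propDecidable _) univ
    with hsdef
  have hmem : ∀ Z : Finset α, Z ∈ s ↔ Z ∈ 𝒞 ∧ A ⊆ Z := by
    intro Z; simp [hsdef]
  have hne : s.Nonempty := ⟨univ, (hmem univ).2 ⟨hCG.2.1, subset_univ A⟩⟩
  obtain ⟨Z₀, hZ₀, hiff⟩ := exists_inter hCG.2.2.1 s hne (fun Z hZ => ((hmem Z).1 hZ).1)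
  have : clo 𝒞 A = Z₀ := by
    ext e
    rw [mem_clo, hiff e]
    constructor
    · intro h Z hZ; exact h Z ((hmem Z).1 hZ).1 ((hmem Z).1 hZ).2
    · intro h Z hZ hAZ; exact h Z ((hmem Z).2 ⟨hZ, hAZ⟩)
  rw [this]; exact hZ₀

lemma clo_eq_self {Z : Finset α} (hZ : Z ∈ 𝒞) : clo 𝒞 Z = Z :=
  subset_antisymm (clo_subset hZ subset_rfl) subset_clo

/-- single-step extension towards a larger closed set -/
lemma step_aux (hCG : IsConvexGeometry 𝒞) :
    ∀ n : ℕ, ∀ W ∈ 𝒞, Wᶜ.card ≤ n → ∀ Z ∈ 𝒞, ¬ Z ⊆ W →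
      ∃ e ∈ Z, e ∉ W ∧ insert e (W ∩ Z) ∈ 𝒞 := by
  intro n
  induction n with
  | zero =>
      intro W hW hcard Z hZ hZW
      exfalso
      have : Wᶜ = ∅ := card_eq_zero.1 (Nat.le_zero.1 hcard)
      have : W = univ := by
        rwa [compl_eq_empty_iff] at this
      exact hZW (this ▸ subset_univ Z)
  | succ n ih =>
      intro W hW hcard Z hZ hZW
      have hWu : W ≠ univ := fun h => hZW (h ▸ subset_univ Z)
      obtain ⟨e₀, he₀, hins⟩ := hCG.2.2.2 W hW hWu
      by_cases he₀Z : e₀ ∈ Z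
      · exact ⟨e₀, he₀Z, he₀, by
          have : insert e₀ (W ∩ Z) = (insert e₀ W) ∩ Z := by
            ext a; simp only [mem_insert, mem_inter]
            constructor
            · rintro (rfl | ⟨h1, h2⟩)
              · exact ⟨Or.inl rfl, he₀Z⟩
              · exact ⟨Or.inr h1, h2⟩
            · rintro ⟨(rfl | h1), h2⟩
              · exact Or.inl rfl
              · exact Or.inr ⟨h1, h2⟩
          rw [this]; exact hCG.2.2.1 _ hins _ hZ⟩
      · have hcard' : (insert e₀ W)ᶜ.card ≤ n := by
          rw [compl_insert]
          have h1 : e₀ ∈ Wᶜ := mem_compl.2 he₀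
          have := card_erase_of_mem h1
          omega
        have hZW' : ¬ Z ⊆ insert e₀ W := by
          intro h
          apply hZW
          intro a ha
          rcases mem_insert.1 (h ha) with rfl | h'
          · exact absurd ha he₀Z
          · exact h'
        obtain ⟨e, heZ, heW', hins'⟩ := ih (insert e₀ W) hins hcard' Z hZ hZW'
        refine ⟨e, heZ, fun heW => heW' (mem_insert_of_mem heW), ?_⟩
        have : insert e₀ W ∩ Z = W ∩ Z := by
          ext a; simp only [mem_inter, mem_insert]
          constructor
          · rintro ⟨(rfl | h1), h2⟩
            · exact absurd h2 he₀Z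
            · exact ⟨h1, h2⟩
          · rintro ⟨h1, h2⟩; exact ⟨Or.inr h1, h2⟩
        rwa [this] at hins'

lemma step (hCG : IsConvexGeometry 𝒞) {W Z : Finset α} (hW : W ∈ 𝒞) (hZ : Z ∈ 𝒞)
    (hWZ : W ⊆ Z) (hne : W ≠ Z) : ∃ e ∈ Z, e ∉ W ∧ insert e W ∈ 𝒞 := by
  have hZW : ¬ Z ⊆ W := fun h => hne (subset_antisymm hWZ h)
  obtain ⟨e, heZ, heW, hins⟩ := step_aux hCG Wᶜ.card W hW le_rfl Z hZ hZW
  rw [inter_eq_left.2 hWZ] at hins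
  exact ⟨e, heZ, heW, hins⟩

end Aux
section Aux2
variable {α : Type*} [Fintype α] [DecidableEq α] {𝒞 : Set (Finset α)}

/-- if `r ∉ clo A` then `r` is extreme in `clo (insert r A)` -/
lemma clo_insert_erase (hCG : IsConvexGeometry 𝒞) {A : Finset α} {r : α}
    (hr : r ∉ clo 𝒞 A) : (clo 𝒞 (insert r A)).erase r ∈ 𝒞 := by
  classical
  set G := clo 𝒞 (insert r A) with hG
  have hGC : G ∈ 𝒞 := clo_mem hCG _
  have hrG : r ∈ G := subset_clo (mem_insert_self r A)
  set t : Finset (Finset α) :=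
    @Finset.filter (Finset α) (fun V => V ∈ 𝒞 ∧ A ⊆ V ∧ V ⊆ G.erase r)
      (fun _ => Classical.propDecidable _) univ with htdef
  have hmem : ∀ V : Finset α, V ∈ t ↔ V ∈ 𝒞 ∧ A ⊆ V ∧ V ⊆ G.erase r := by
    intro V; simp [htdef]
  have hclA : clo 𝒞 A ∈ t := by
    refine (hmem _).2 ⟨clo_mem hCG A, subset_clo, fun a ha => ?_⟩
    refine mem_erase.2 ⟨fun h => hr (h ▸ ha), ?_⟩
    exact clo_mono (subset_insert r A) ha
  obtain ⟨V, hVt, hVmax⟩ := t.exists_max_image card ⟨_, hclA⟩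
  obtain ⟨hVC, hAV, hVG⟩ := (hmem V).1 hVt
  have hVne : V ≠ G := by
    intro h; exact (mem_erase.1 (hVG (h ▸ hrG))).1 rfl
  obtain ⟨e, heG, heV, hins⟩ := step hCG hVC hGC (hVG.trans (erase_subset r G)) hVne
  by_cases her : e = r
  · subst her
    have h1 : G ⊆ insert e V := clo_subset hins (insert_subset_insert _ hAV)
    have h2 : G.erase e ⊆ V := by
      intro a ha
      rcases mem_insert.1 (h1 (mem_erase.1 ha).2) with rfl | h
      · exact absurd rfl (mem_erase.1 ha).1
      · exact h
    have : G.erase e = V := subset_antisymm h2 hVG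
    rw [this]; exact hVC
  · exfalso
    have hins_t : insert e V ∈ t := by
      refine (hmem _).2 ⟨hins, hAV.trans (subset_insert e V), ?_⟩
      intro a ha
      rcases mem_insert.1 ha with rfl | h
      · exact mem_erase.2 ⟨her, heG⟩
      · exact hVG h
    have := hVmax _ hins_t
    rw [card_insert_of_notMem heV] at this
    omega

/-- anti-exchange -/
lemma anti_exchange_s11 (hCG : IsConvexGeometry 𝒞) {W : Finset α} {p q : α} (hW : W ∈ 𝒞)
    (hp : p ∉ W) (hq : q ∉ W) (hpq : p ≠ q) (h : q ∈ clo 𝒞 (insert p W)) :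
    p ∉ clo 𝒞 (insert q W) := by
  have hpW : p ∉ clo 𝒞 W := by rwa [clo_eq_self hW]
  have hE : (clo 𝒞 (insert p W)).erase p ∈ 𝒞 := clo_insert_erase hCG hpW
  have hsub : insert q W ⊆ (clo 𝒞 (insert p W)).erase p := by
    intro a ha
    rcases mem_insert.1 ha with rfl | h'
    · exact mem_erase.2 ⟨(Ne.symm hpq), h⟩
    · exact mem_erase.2 ⟨fun hh => hp (hh ▸ h'), clo_mono (subset_insert p W) (subset_clo h')⟩
  intro hcon
  exact (mem_erase.1 (clo_subset hE hsub hcon)).1 rfl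

/-- the root belongs to every closed set containing the stem -/
lemma root_mem {C : Finset α} {r : α} (h : IsRootedCircuit 𝒞 C r) {Z : Finset α}
    (hZ : Z ∈ 𝒞) (hst : C.erase r ⊆ Z) : r ∈ Z := by
  have h1 : Z ∩ C ∈ {Y : Finset α | ∃ X ∈ 𝒞, X ∩ C = Y} := ⟨Z, hZ, rfl⟩
  rw [h.2] at h1
  by_contra hrZ
  apply h1.2
  apply subset_antisymm
  · intro a ha
    exact mem_erase.2 ⟨fun hh => hrZ (hh ▸ (mem_inter.1 ha).1), (mem_inter.1 ha).2⟩
  · intro a ha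
    exact mem_inter.2 ⟨hst ha, (mem_erase.1 ha).2⟩

end Aux2
section Aux3
variable {α : Type*} [Fintype α] [DecidableEq α] {𝒞 : Set (Finset α)}

lemma rootedCircuit_of_minimal_stem (hCG : IsConvexGeometry 𝒞) {A : Finset α} {r : α}
    (hrA : r ∉ A) (hr : r ∈ clo 𝒞 A) (hmin : ∀ b ∈ A, r ∉ clo 𝒞 (A.erase b)) :
    IsRootedCircuit 𝒞 (insert r A) r := by
  classical
  refine ⟨mem_insert_self r A, ?_⟩
  set C := insert r A with hC
  have hCer : C.erase r = A := erase_insert hrA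
  have hmemC : ∀ a, a ∈ C ↔ a = r ∨ a ∈ A := fun a => mem_insert
  -- useful: A ⊆ clo of (A.erase a) plus a
  have hA_sub : ∀ a ∈ A, ∀ M : Finset α, A.erase a ⊆ M → A ⊆ insert a M := by
    intro a ha M hM b hb
    by_cases hba : b = a
    · exact hba ▸ mem_insert_self a M
    · exact mem_insert_of_mem (hM (mem_erase.2 ⟨hba, hb⟩))
  ext Y
  simp only [Set.mem_setOf_eq]
  constructor
  · rintro ⟨Z, hZ, rfl⟩
    refine ⟨inter_subset_right, ?_⟩
    intro hEq
    rw [hCer] at hEq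
    have hAZ : A ⊆ Z := by
      intro a ha
      have : a ∈ Z ∩ C := hEq ▸ ha
      exact (mem_inter.1 this).1
    have hrZ : r ∈ Z := mem_clo.1 hr Z hZ hAZ
    have : r ∈ Z ∩ C := mem_inter.2 ⟨hrZ, mem_insert_self r A⟩
    rw [hEq] at this
    exact hrA this
  · rintro ⟨hYC, hYne⟩
    refine ⟨clo 𝒞 Y, clo_mem hCG Y, ?_⟩
    have hbase : Y ⊆ clo 𝒞 Y ∩ C := fun a ha => mem_inter.2 ⟨subset_clo ha, hYC ha⟩
    by_cases hrY : r ∈ Y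
    · -- case r ∈ Y
      apply subset_antisymm _ hbase
      intro a ha
      obtain ⟨haclo, haC⟩ := mem_inter.1 ha
      by_contra haY
      have har : a ≠ r := fun h => haY (h ▸ hrY)
      have haA : a ∈ A := ((hmemC a).1 haC).resolve_left har
      set M := clo 𝒞 (A.erase a) with hM
      have hMC : M ∈ 𝒞 := clo_mem hCG _
      have hrM : r ∉ M := hmin a haA
      have haM : a ∉ M := by
        intro haM
        have hAM : A ⊆ M := by
          have := hA_sub a haA M subset_clo
          intro b hb
          rcases mem_insert.1 (this hb) with rfl | h
          · exact haM
          · exact h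
        exact hrM (mem_clo.1 hr M hMC hAM)
      have h1 : Y ⊆ insert r M := by
        intro b hb
        by_cases hbr : b = r
        · exact hbr ▸ mem_insert_self r M
        · have hbA : b ∈ A := ((hmemC b).1 (hYC hb)).resolve_left hbr
          have hba : b ≠ a := fun h => haY (h ▸ hb)
          exact mem_insert_of_mem (subset_clo (mem_erase.2 ⟨hba, hbA⟩))
      have h2 : a ∈ clo 𝒞 (insert r M) := clo_mono h1 haclo
      have h3 : r ∉ clo 𝒞 (insert a M) :=
        anti_exchange_s11 hCG hMC hrM haM (Ne.symm har) h2
      apply h3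
      have hAaM : A ⊆ insert a M := hA_sub a haA M subset_clo
      exact clo_mono hAaM hr
    · -- case r ∉ Y
      have hYA : Y ⊆ A := by
        intro b hb
        exact ((hmemC b).1 (hYC hb)).resolve_left (fun h => hrY (h ▸ hb))
      apply subset_antisymm _ hbase
      intro a ha
      obtain ⟨haclo, haC⟩ := mem_inter.1 ha
      by_contra haY
      by_cases har : a = r
      · subst har
        have hYneA : Y ≠ A := by
          rw [hCer] at hYne; exact hYne
        obtain ⟨b, hbA, hbY⟩ : ∃ b ∈ A, b ∉ Y := by
          by_contra hcon
          push_neg at hcon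
          exact hYneA (subset_antisymm hYA hcon)
        have : Y ⊆ A.erase b := fun c hc => mem_erase.2 ⟨fun h => hbY (h ▸ hc), hYA hc⟩
        exact hmin b hbA (clo_mono this haclo)
      · have haA : a ∈ A := ((hmemC a).1 haC).resolve_left har
        have hYa : Y ⊆ A.erase a := fun c hc => mem_erase.2 ⟨fun h => haY (h ▸ hc), hYA hc⟩
        have haM : a ∈ clo 𝒞 (A.erase a) := clo_mono hYa haclo
        have hAM : A ⊆ clo 𝒞 (A.erase a) := by
          have := hA_sub a haA (clo 𝒞 (A.erase a)) subset_clo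
          intro b hb
          rcases mem_insert.1 (this hb) with rfl | h
          · exact haM
          · exact h
        exact hmin a haA (mem_clo.1 hr _ (clo_mem hCG _) hAM)

end Aux3
section Aux4
variable {α : Type*} [Fintype α] [DecidableEq α] {𝒞 : Set (Finset α)}

lemma exists_critical (hCG : IsConvexGeometry 𝒞) {D : Finset α} {r : α}
    (hD : D ∈ 𝒞) (hrD : r ∈ D) (hrcl : r ∈ clo 𝒞 (D.erase r)) :
    ∃ C, C ⊆ D ∧ IsCriticalRootedCircuit 𝒞 C r := by
  classical
  set t : Finset (Finset α) :=
    @Finset.filter (Finset α)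
      (fun E => E ∈ 𝒞 ∧ E ⊆ D ∧ r ∈ E ∧ r ∈ clo 𝒞 (E.erase r))
      (fun _ => Classical.propDecidable _) univ with htdef
  have hmemt : ∀ E : Finset α, E ∈ t ↔ E ∈ 𝒞 ∧ E ⊆ D ∧ r ∈ E ∧ r ∈ clo 𝒞 (E.erase r) := by
    intro E; simp [htdef]
  have hDt : D ∈ t := (hmemt D).2 ⟨hD, subset_rfl, hrD, hrcl⟩
  obtain ⟨D', hD't, hD'min⟩ := t.exists_min_image card ⟨D, hDt⟩
  obtain ⟨hD'C, hD'D, hrD', hrcl'⟩ := (hmemt D').1 hD't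
  set B : Finset α :=
    @Finset.filter α (fun b => (D'.erase r).erase b ∈ 𝒞)
      (fun _ => Classical.propDecidable _) (D'.erase r) with hBdef
  have hmemB : ∀ b, b ∈ B ↔ b ∈ D'.erase r ∧ (D'.erase r).erase b ∈ 𝒞 := by
    intro b; simp [hBdef]
  have hBr : r ∉ B := fun h => (mem_erase.1 ((hmemB r).1 h).1).1 rfl
  have hBsub : B ⊆ D'.erase r := fun b hb => ((hmemB b).1 hb).1
  -- minimality of the stem
  have hminstem : ∀ b ∈ B, r ∉ clo 𝒞 (B.erase b) := by
    intro b hb hcon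
    obtain ⟨hb1, hb2⟩ := (hmemB b).1 hb
    have hsub : B.erase b ⊆ (D'.erase r).erase b :=
      fun c hc => mem_erase.2 ⟨(mem_erase.1 hc).1, hBsub (mem_erase.1 hc).2⟩
    have : r ∈ (D'.erase r).erase b := clo_subset hb2 hsub hcon
    exact (mem_erase.1 (mem_erase.1 this).2).1 rfl
  -- the stem spans the root
  have hrB : r ∈ clo 𝒞 B := by
    by_contra hnot
    set Z := clo 𝒞 B with hZdef
    have hZC : Z ∈ 𝒞 := clo_mem hCG B
    have hZD' : Z ⊆ D' := clo_subset hD'C (hBsub.trans (erase_subset r D'))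
    have hZne : Z ≠ D' := fun h => hnot (h ▸ hrD')
    -- maximal closed set between Z and D', proper
    set u : Finset (Finset α) :=
      @Finset.filter (Finset α) (fun V => V ∈ 𝒞 ∧ Z ⊆ V ∧ V ⊆ D' ∧ V ≠ D')
        (fun _ => Classical.propDecidable _) univ with hudef
    have hmemu : ∀ V : Finset α, V ∈ u ↔ V ∈ 𝒞 ∧ Z ⊆ V ∧ V ⊆ D' ∧ V ≠ D' := by
      intro V; simp [hudef]
    have hZu : Z ∈ u := (hmemu Z).2 ⟨hZC, subset_rfl, hZD', hZne⟩
    obtain ⟨V, hVu, hVmax⟩ := u.exists_max_image card ⟨Z, hZu⟩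
    obtain ⟨hVC, hZV, hVD', hVne⟩ := (hmemu V).1 hVu
    obtain ⟨e, heD', heV, hins⟩ := step hCG hVC hD'C hVD' hVne
    have hinsD' : insert e V = D' := by
      by_contra hcon
      have : insert e V ∈ u :=
        (hmemu _).2 ⟨hins, hZV.trans (subset_insert e V), insert_subset heD' hVD', hcon⟩
      have := hVmax _ this
      rw [card_insert_of_notMem heV] at this
      omega
    have hVeq : V = D'.erase e := by
      rw [← hinsD', erase_insert heV]
    by_cases her : e = r
    · have h1 : D'.erase r ⊆ V := by rw [hVeq, her]
      have h2 : r ∈ V := clo_subset hVC h1 hrcl'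
      rw [hVeq, her] at h2
      exact (mem_erase.1 h2).1 rfl
    · -- W = D'.erase e is a smaller member with the same properties unless clo fails
      have hrV : r ∈ V := by
        rw [hVeq]; exact mem_erase.2 ⟨Ne.symm her, hrD'⟩
      have hVcard : V.card < D'.card := by
        rw [hVeq]; exact card_lt_card (erase_ssubset heD')
      have hVnott : V ∉ t := by
        intro hVt
        have := hD'min V hVt
        omega
      have hnr : r ∉ clo 𝒞 (V.erase r) := by
        intro hcon
        exact hVnott ((hmemt V).2 ⟨hVC, hVD'.trans hD'D, hrV, hcon⟩)
      have hVer : V.erase r ∈ 𝒞 := by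
        have h1 : clo 𝒞 (V.erase r) ⊆ V := clo_subset hVC (erase_subset r V)
        have h2 : clo 𝒞 (V.erase r) ⊆ V.erase r := by
          intro a ha
          exact mem_erase.2 ⟨fun h => hnr (h ▸ ha), h1 ha⟩
        have : clo 𝒞 (V.erase r) = V.erase r := subset_antisymm h2 subset_clo
        rw [← this]; exact clo_mem hCG _
      have heB : e ∈ B := by
        refine (hmemB e).2 ⟨mem_erase.2 ⟨her, heD'⟩, ?_⟩
        have : (D'.erase r).erase e = V.erase r := by
          rw [hVeq, erase_right_comm]
        rw [this]; exact hVer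
      exact heV (hZV (subset_clo heB))
  -- build the circuit
  have hcirc : IsRootedCircuit 𝒞 (insert r B) r :=
    rootedCircuit_of_minimal_stem hCG hBr hrB hminstem
  -- clo B = D'
  have hcloB : clo 𝒞 B = D' := by
    have h1 : clo 𝒞 B ⊆ D' := clo_subset hD'C (hBsub.trans (erase_subset r D'))
    have h2 : clo 𝒞 B ∈ t := by
      refine (hmemt _).2 ⟨clo_mem hCG B, h1.trans hD'D, hrB, ?_⟩
      have hBsub' : B ⊆ (clo 𝒞 B).erase r :=
        fun b hb => mem_erase.2 ⟨fun h => hBr (h ▸ hb), subset_clo hb⟩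
      exact clo_mono hBsub' hrB
    have := hD'min _ h2
    exact eq_of_subset_of_card_le h1 this
  have hCsubD' : insert r B ⊆ D' := insert_subset hrD' (hBsub.trans (erase_subset r D'))
  refine ⟨insert r B, hCsubD'.trans hD'D, hcirc, D', hD'C, hCsubD', ?_, ?_, ?_⟩
  · intro Z' hZ' hCZ'
    rw [← hcloB]
    exact clo_subset hZ' ((subset_insert r B).trans hCZ')
  · intro hcon
    have : r ∈ D'.erase r := clo_subset hcon subset_rfl hrcl'
    exact (mem_erase.1 this).1 rfl
  · intro b hb
    rw [erase_insert hBr] at hb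
    exact ((hmemB b).1 hb).2

end Aux4
section Aux5
variable {α : Type*} [Fintype α] [DecidableEq α] {𝒞 𝒞' : Set (Finset α)}

lemma exists_positive (hCG : IsConvexGeometry 𝒞) (hsub : 𝒞' ⊆ 𝒞)
    (hideal : ∀ X ∈ 𝒞, (∃ Y ∈ 𝒞', X ⊆ Y) → X ∈ 𝒞') {X : Finset α}
    (hX : X ∈ 𝒞) (hX' : X ∉ 𝒞') : ∃ P, P ⊆ X ∧ IsPositiveCircuit 𝒞' P := by
  classical
  have hinter : ∀ Y₁ ∈ 𝒞', ∀ Y₂ ∈ 𝒞', Y₁ ∩ Y₂ ∈ 𝒞' := by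
    intro Y₁ h1 Y₂ h2
    exact hideal _ (hCG.2.2.1 _ (hsub h1) _ (hsub h2)) ⟨Y₁, h1, inter_subset_left⟩
  set t : Finset (Finset α) :=
    @Finset.filter (Finset α) (fun P => P ⊆ X ∧ ∀ Y ∈ 𝒞', ¬ P ⊆ Y)
      (fun _ => Classical.propDecidable _) univ with htdef
  have hmemt : ∀ P : Finset α, P ∈ t ↔ P ⊆ X ∧ ∀ Y ∈ 𝒞', ¬ P ⊆ Y := by
    intro P; simp [htdef]
  have hXt : X ∈ t := by
    refine (hmemt X).2 ⟨subset_rfl, fun Y hY hXY => hX' (hideal X hX ⟨Y, hY, hXY⟩)⟩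
  obtain ⟨P, hPt, hPmin⟩ := t.exists_min_image card ⟨X, hXt⟩
  obtain ⟨hPX, hPprop⟩ := (hmemt P).1 hPt
  refine ⟨P, hPX, ?_⟩
  -- helper: intersecting finitely many members of 𝒞'
  have helper : ∀ s : Finset α, s.Nonempty → ∀ Y₀ : Finset α,
      (∀ b ∈ s, ∃ Z ∈ 𝒞', Y₀ ⊆ Z ∧ b ∉ Z) →
      ∃ Z ∈ 𝒞', Y₀ ⊆ Z ∧ ∀ b ∈ s, b ∉ Z := by
    intro s hs
    induction hs using Finset.Nonempty.cons_induction with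
    | singleton a =>
        intro Y₀ h
        obtain ⟨Z, hZ, h1, h2⟩ := h a (mem_singleton_self a)
        exact ⟨Z, hZ, h1, fun b hb => (mem_singleton.1 hb) ▸ h2⟩
    | cons a s ha hs ih =>
        intro Y₀ h
        obtain ⟨Z₁, hZ₁, hY₁, ha₁⟩ := h a (mem_cons_self a s)
        obtain ⟨Z₂, hZ₂, hY₂, hs₂⟩ := ih Y₀ (fun b hb => h b (mem_cons_of_mem hb))
        refine ⟨Z₁ ∩ Z₂, hinter _ hZ₁ _ hZ₂, subset_inter hY₁ hY₂, ?_⟩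
        intro b hb
        rcases mem_cons.1 hb with rfl | hb'
        · exact fun hc => ha₁ (mem_inter.1 hc).1
        · exact fun hc => hs₂ b hb' (mem_inter.1 hc).2
  ext Y
  simp only [Set.mem_setOf_eq]
  constructor
  · rintro ⟨Z, hZ, rfl⟩
    refine ⟨inter_subset_right, fun hEq => ?_⟩
    exact hPprop Z hZ (fun a ha => (mem_inter.1 (by rw [hEq]; exact ha : a ∈ Z ∩ P)).1)
  · rintro ⟨hYP, hYne⟩
    have hsne : (P \ Y).Nonempty := by
      rw [sdiff_nonempty]
      exact fun h => hYne (subset_antisymm hYP h)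
    have hhyp : ∀ b ∈ P \ Y, ∃ Z ∈ 𝒞', Y ⊆ Z ∧ b ∉ Z := by
      intro b hb
      obtain ⟨hbP, hbY⟩ := mem_sdiff.1 hb
      have hcard : (P.erase b).card < P.card := card_erase_lt_of_mem hbP
      have : P.erase b ∉ t := by
        intro hc
        have := hPmin _ hc
        omega
      have : ¬ (P.erase b ⊆ X ∧ ∀ Y' ∈ 𝒞', ¬ P.erase b ⊆ Y') := fun hc => this ((hmemt _).2 hc)
      push_neg at this
      obtain ⟨Z, hZ, hPZ⟩ := this ((erase_subset b P).trans hPX)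
      refine ⟨Z, hZ, ?_, ?_⟩
      · exact fun c hc => hPZ (mem_erase.2 ⟨fun h => hbY (h ▸ hc), hYP hc⟩)
      · intro hbZ
        exact hPprop Z hZ (fun c hc => by
          by_cases hcb : c = b
          · exact hcb ▸ hbZ
          · exact hPZ (mem_erase.2 ⟨hcb, hc⟩))
    obtain ⟨Z, hZ, hYZ, hZP⟩ := helper (P \ Y) hsne Y hhyp
    refine ⟨Z, hZ, ?_⟩
    apply subset_antisymm
    · intro a ha
      obtain ⟨haZ, haP⟩ := mem_inter.1 ha
      by_contra haY
      exact hZP a (mem_sdiff.2 ⟨haP, haY⟩) haZ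
    · intro a ha
      exact mem_inter.2 ⟨hYZ ha, hYP ha⟩

lemma exists_grading_aux (hCG : IsConvexGeometry 𝒞) :
    ∀ n : ℕ, ∀ W ∈ 𝒞, Wᶜ.card ≤ n →
      ∃ g : α → ℕ, (∀ e ∈ W, g e = 0) ∧ (∀ e ∉ W, 1 ≤ g e) ∧
        (∀ e ∉ W, ∀ e', e' ∉ W → e ≠ e' → g e ≠ g e') ∧
        (∀ e ∉ W, (univ.filter (fun a => g a < g e)) ∈ 𝒞) := by
  intro n
  induction n with
  | zero =>
      intro W hW hcard
      have hWu : W = univ := by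
        rw [← compl_eq_empty_iff]
        exact card_eq_zero.1 (Nat.le_zero.1 hcard)
      exact ⟨fun _ => 0, fun _ _ => rfl, fun e he => absurd (hWu ▸ mem_univ e) he,
        fun e he => absurd (hWu ▸ mem_univ e) he, fun e he => absurd (hWu ▸ mem_univ e) he⟩
  | succ n ih =>
      intro W hW hcard
      by_cases hWu : W = univ
      · exact ⟨fun _ => 0, fun _ _ => rfl, fun e he => absurd (hWu ▸ mem_univ e) he,
          fun e he => absurd (hWu ▸ mem_univ e) he, fun e he => absurd (hWu ▸ mem_univ e) he⟩
      · obtain ⟨e₀, he₀, hins⟩ := hCG.2.2.2 W hW hWu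
        have hcard' : (insert e₀ W)ᶜ.card ≤ n := by
          rw [compl_insert]
          have h1 : e₀ ∈ Wᶜ := mem_compl.2 he₀
          have := card_erase_of_mem h1
          have h2 : 0 < Wᶜ.card := card_pos.2 ⟨e₀, h1⟩
          omega
        obtain ⟨g', h0', h1', hinj', hfilt'⟩ := ih (insert e₀ W) hins hcard'
        set g : α → ℕ := fun e => if e ∈ W then 0 else if e = e₀ then 1 else g' e + 1 with hg
        have hgW : ∀ e ∈ W, g e = 0 := fun e he => by simp [hg, he]
        have hge₀ : g e₀ = 1 := by simp [hg, he₀]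
        have hgother : ∀ e, e ∉ W → e ≠ e₀ → g e = g' e + 1 := by
          intro e h1 h2; simp [hg, h1, h2]
        have hnotins : ∀ e, e ∉ W → e ≠ e₀ → e ∉ insert e₀ W := by
          intro e h1 h2 hc
          rcases mem_insert.1 hc with rfl | hc'
          · exact h2 rfl
          · exact h1 hc'
        have hgpos : ∀ e ∉ W, 1 ≤ g e := by
          intro e he
          by_cases h : e = e₀
          · rw [h, hge₀]
          · rw [hgother e he h]; omega
        refine ⟨g, hgW, hgpos, ?_, ?_⟩
        · intro e he e' he' hne
          by_cases h : e = e₀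
          · subst h
            rw [hge₀, hgother e' he' (Ne.symm hne)]
            have := h1' e' (hnotins e' he' (Ne.symm hne))
            omega
          · by_cases h' : e' = e₀
            · subst h'
              rw [hge₀, hgother e he h]
              have := h1' e (hnotins e he h)
              omega
            · rw [hgother e he h, hgother e' he' h']
              have := hinj' e (hnotins e he h) e' (hnotins e' he' h') hne
              omega
        · intro e he
          by_cases h : e = e₀
          · have hge1 : g e = 1 := by rw [h, hge₀]
            have : univ.filter (fun a => g a < g e) = W := by
              ext a
              simp only [mem_filter, mem_univ, true_and, hge1]
              constructor
              · intro ha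
                by_contra haW
                have := hgpos a haW
                omega
              · intro ha; rw [hgW a ha]; omega
            rw [this]; exact hW
          · have hgee : g e = g' e + 1 := hgother e he h
            have hee : e ∉ insert e₀ W := hnotins e he h
            have h1e : 1 ≤ g' e := h1' e hee
            have : univ.filter (fun a => g a < g e) = univ.filter (fun a => g' a < g' e) := by
              ext a
              simp only [mem_filter, mem_univ, true_and, hgee]
              by_cases haW : a ∈ W
              · simp only [hgW a haW, h0' a (mem_insert_of_mem haW)]
                omega
              · by_cases hae : a = e₀
                · subst hae
                  simp only [hge₀, h0' _ (mem_insert_self _ _)]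
                  omega
                · rw [hgother a haW hae]
                  omega
            rw [this]; exact hfilt' e hee

lemma exists_grading (hCG : IsConvexGeometry 𝒞) {X : Finset α} (hX : X ∈ 𝒞) :
    ∃ g : α → ℕ, (∀ e ∈ X, g e = 0) ∧ (∀ e ∉ X, 1 ≤ g e) ∧
      (∀ e ∉ X, ∀ e', e' ∉ X → e ≠ e' → g e ≠ g e') ∧
      (∀ e ∉ X, (univ.filter (fun a => g a < g e)) ∈ 𝒞) :=
  exists_grading_aux hCG Xᶜ.card X hX le_rfl

end Aux5
/-- For an ideal `𝒞'` of a convex geometry `𝒞`, the orthant `𝒪(X)` meets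
`K₀ = (⋂ K(C,r) over critical rooted circuits) ∩ (⋂ K(P) over positive circuits)`
if and only if `X ∈ 𝒞'`. -/
theorem ideal_realized_by_critical_circuits_and_positive_circuits
    {α : Type*} [Fintype α] [DecidableEq α] (𝒞 𝒞' : Set (Finset α))
    (hCG : IsConvexGeometry 𝒞) (hsub : 𝒞' ⊆ 𝒞)
    (hideal : ∀ X ∈ 𝒞, (∃ Y ∈ 𝒞', X ⊆ Y) → X ∈ 𝒞') :
    ∀ X : Finset α,
      (Orthant X ∩
        ({x : α → ℝ | ∀ C r, IsCriticalRootedCircuit 𝒞 C r → x ∈ Kcr C r} ∩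
          {x : α → ℝ | ∀ P : Finset α, IsPositiveCircuit 𝒞' P →
            (∑ e ∈ P, x e) < 0})).Nonempty ↔ X ∈ 𝒞' := by
  classical
  intro X
  set n := Fintype.card α with hn
  constructor
  · rintro ⟨x, hxO, hxC, hxP⟩
    obtain ⟨hpos, hneg⟩ := hxO
    simp only [Set.mem_setOf_eq] at hxC hxP
    -- Step 1 : X ∈ 𝒞
    have hX𝒞 : X ∈ 𝒞 := by
      by_contra hXC
      set D₀ := clo 𝒞 X with hD₀
      have hD₀C : D₀ ∈ 𝒞 := clo_mem hCG X
      have hXD₀ : X ⊆ D₀ := subset_clo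
      have hne : D₀ ≠ X := fun h => hXC (h ▸ hD₀C)
      have hsdne : (D₀ \ X).Nonempty := by
        rw [sdiff_nonempty]
        exact fun h => hne (subset_antisymm h hXD₀)
      obtain ⟨r, hrs, hrmin⟩ := (D₀ \ X).exists_min_image x hsdne
      obtain ⟨hrD₀, hrX⟩ := mem_sdiff.1 hrs
      have hrcl : r ∈ clo 𝒞 (D₀.erase r) := by
        have hsb : X ⊆ D₀.erase r := fun a ha => mem_erase.2 ⟨fun h => hrX (h ▸ ha), hXD₀ ha⟩
        exact clo_mono hsb hrD₀
      obtain ⟨C, hCD₀, hcrit⟩ := exists_critical hCG hD₀C hrD₀ hrcl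
      have hK := hxC C r hcrit
      simp only [Kcr, Set.mem_setOf_eq] at hK
      have hxr : x r < 0 := hneg r hrX
      have hbound : ∀ e ∈ C.erase r, x r ≤ x e := by
        intro e he
        have heD₀ : e ∈ D₀ := hCD₀ ((erase_subset r C) he)
        by_cases heX : e ∈ X
        · exact le_of_lt (lt_trans hxr (hpos e heX))
        · exact hrmin e (mem_sdiff.2 ⟨heD₀, heX⟩)
      have hsum : ((C.erase r).card : ℝ) * x r ≤ ∑ e ∈ C.erase r, x e := by
        have := Finset.card_nsmul_le_sum (C.erase r) x (x r) hbound
        simpa [nsmul_eq_mul] using this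
      have hcard : (C.erase r).card < n := by
        have h1 : C.erase r ⊂ univ :=
          ssubset_univ_iff.2 (fun h => (notMem_erase r C) (h ▸ mem_univ r))
        simpa [hn, card_univ] using card_lt_card h1
      have hcard' : ((C.erase r).card : ℝ) + 1 ≤ (n : ℝ) := by exact_mod_cast hcard
      have hmul : ((n : ℝ) - 1) * x r ≤ ((C.erase r).card : ℝ) * x r :=
        mul_le_mul_of_nonpos_right (by linarith) hxr.le
      linarith
    -- Step 2 : X ∈ 𝒞'
    by_contra hX'
    obtain ⟨P, hPX, hPcirc⟩ := exists_positive hCG hsub hideal hX𝒞 hX'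
    have h1 := hxP P hPcirc
    have h2 : (0:ℝ) ≤ ∑ e ∈ P, x e := sum_nonneg fun e he => (hpos e (hPX he)).le
    linarith
  · intro hX'
    have hX𝒞 : X ∈ 𝒞 := hsub hX'
    obtain ⟨g, hg0, hg1, hginj, hgfilt⟩ := exists_grading hCG hX𝒞
    set x : α → ℝ := fun e => if e ∈ X then 1 else -((n+1 : ℝ) ^ (g e)) with hx
    have hxX : ∀ e ∈ X, x e = 1 := fun e he => by simp [hx, he]
    have hxnX : ∀ e, e ∉ X → x e = -((n+1:ℝ) ^ (g e)) := fun e he => by simp [hx, he]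
    have hbase : (1:ℝ) ≤ (n:ℝ) + 1 := by
      have : (0:ℝ) ≤ (n:ℝ) := Nat.cast_nonneg n
      linarith
    have hle1 : ∀ e, x e ≤ 1 := by
      intro e
      by_cases he : e ∈ X
      · rw [hxX e he]
      · rw [hxnX e he]
        have : (0:ℝ) < (n+1:ℝ)^(g e) := by positivity
        linarith
    refine ⟨x, ⟨?_, ?_⟩, ?_, ?_⟩
    · intro e he; rw [hxX e he]; norm_num
    · intro e he
      rw [hxnX e he]
      have : (0:ℝ) < (n+1:ℝ)^(g e) := by positivity
      linarith
    · -- critical rooted circuits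
      intro C r hcrit
      have hcirc := hcrit.1
      simp only [Kcr, Set.mem_setOf_eq]
      by_cases hrX : r ∈ X
      · have hxr : x r = 1 := hxX r hrX
        have hsum : ∑ e ∈ C.erase r, x e ≤ ((C.erase r).card : ℝ) := by
          have := Finset.sum_le_card_nsmul (C.erase r) x 1 (fun e _ => hle1 e)
          simpa [nsmul_eq_mul] using this
        have hcard : (C.erase r).card < n := by
          have h1 : C.erase r ⊂ univ :=
            ssubset_univ_iff.2 (fun h => (notMem_erase r C) (h ▸ mem_univ r))
          simpa [hn, card_univ] using card_lt_card h1
        have hcard' : ((C.erase r).card : ℝ) + 1 ≤ (n : ℝ) := by exact_mod_cast hcard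
        rw [hxr]
        linarith
      · set p := g r with hp
        have hp1 : 1 ≤ p := hg1 r hrX
        have hZ : univ.filter (fun a => g a < p) ∈ 𝒞 := hgfilt r hrX
        have hnotsub : ¬ C.erase r ⊆ univ.filter (fun a => g a < p) := by
          intro hc
          have hrZ : r ∈ univ.filter (fun a => g a < p) := root_mem hcirc hZ hc
          have := (mem_filter.1 hrZ).2
          omega
        obtain ⟨e', he'C, he'Z⟩ := not_subset.1 hnotsub
        have hge' : p ≤ g e' := by
          have h1 : ¬ (g e' < p) := fun hc => he'Z (mem_filter.2 ⟨mem_univ e', hc⟩)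
          omega
        have he'X : e' ∉ X := fun hc => by
          have := hg0 e' hc; omega
        have he'r : e' ≠ r := (mem_erase.1 he'C).1
        have hgt : p + 1 ≤ g e' := by
          have hne := hginj e' he'X r hrX he'r
          omega
        have hsplit : ∑ e ∈ C.erase r, x e = x e' + ∑ e ∈ (C.erase r).erase e', x e :=
          (Finset.add_sum_erase _ x he'C).symm
        have hrest : ∑ e ∈ (C.erase r).erase e', x e ≤ (((C.erase r).erase e').card : ℝ) := by
          have := Finset.sum_le_card_nsmul ((C.erase r).erase e') x 1 (fun e _ => hle1 e)
          simpa [nsmul_eq_mul] using this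
        have hcard2 : ((C.erase r).erase e').card + 2 ≤ n := by
          have hsub2 : (C.erase r).erase e' ⊆ (univ.erase r).erase e' := by
            intro a ha
            exact mem_erase.2 ⟨(mem_erase.1 ha).1,
              mem_erase.2 ⟨(mem_erase.1 (mem_erase.1 ha).2).1, mem_univ a⟩⟩
          have h1 := card_le_card hsub2
          have h2 : ((univ.erase r).erase e').card = n - 2 := by
            rw [card_erase_of_mem (mem_erase.2 ⟨he'r, mem_univ e'⟩),
              card_erase_of_mem (mem_univ r), card_univ]
            omega
          have hn2 : 2 ≤ n := by
            have : ({e', r} : Finset α).card ≤ n := by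
              simpa [hn, card_univ] using card_le_card (subset_univ ({e', r} : Finset α))
            rwa [card_insert_of_notMem (by simpa using he'r), card_singleton] at this
          omega
        have hxe' : x e' = -((n+1:ℝ)^(g e')) := hxnX e' he'X
        have hpow : (n+1:ℝ)^(p+1) ≤ (n+1:ℝ)^(g e') := pow_le_pow_right₀ hbase hgt
        have hxr : x r = -((n+1:ℝ)^p) := hxnX r hrX
        have hpowp : (n:ℝ)+1 ≤ (n+1:ℝ)^p := by
          calc (n:ℝ)+1 = (n+1:ℝ)^1 := (pow_one _).symm
          _ ≤ (n+1:ℝ)^p := pow_le_pow_right₀ hbase hp1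
        have hpsucc : (n+1:ℝ)^(p+1) = ((n:ℝ)+1) * (n+1:ℝ)^p := by rw [pow_succ]; ring
        have c2 : (((C.erase r).erase e').card : ℝ) + 2 ≤ (n:ℝ) := by exact_mod_cast hcard2
        rw [hsplit, hxe', hxr]
        nlinarith [hrest, hpow, hpowp, hpsucc, c2]
    · -- positive circuits
      intro P hPcirc
      have hXP : X ∩ P ∈ {Y : Finset α | ∃ Z ∈ 𝒞', Z ∩ P = Y} := ⟨X, hX', rfl⟩
      rw [hPcirc] at hXP
      obtain ⟨hsubP, hneP⟩ := hXP
      have hnsub : ¬ P ⊆ X := fun hc => hneP (inter_eq_right.2 hc)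
      obtain ⟨e', he'P, he'X⟩ := not_subset.1 hnsub
      have hsplit : ∑ e ∈ P, x e = x e' + ∑ e ∈ P.erase e', x e :=
        (Finset.add_sum_erase _ x he'P).symm
      have hrest : ∑ e ∈ P.erase e', x e ≤ ((P.erase e').card : ℝ) := by
        have := Finset.sum_le_card_nsmul (P.erase e') x 1 (fun e _ => hle1 e)
        simpa [nsmul_eq_mul] using this
      have hcard : (P.erase e').card < n := by
        have h1 : P.erase e' ⊂ univ :=
          ssubset_univ_iff.2 (fun h => (notMem_erase e' P) (h ▸ mem_univ e'))
        simpa [hn, card_univ] using card_lt_card h1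
      have hcard' : ((P.erase e').card : ℝ) + 1 ≤ (n : ℝ) := by exact_mod_cast hcard
      have hxe' : x e' = -((n+1:ℝ)^(g e')) := hxnX e' he'X
      have hpow : (n:ℝ)+1 ≤ (n+1:ℝ)^(g e') := by
        calc (n:ℝ)+1 = (n+1:ℝ)^1 := (pow_one _).symm
        _ ≤ (n+1:ℝ)^(g e') := pow_le_pow_right₀ hbase (hg1 e' he'X)
      rw [hsplit, hxe']
      linarith
end

section
/- Let (U', 𝒞') be an ideal of a convex geometry (U, 𝒞) with n = |U|. Let ℛ be the set of rooted circuits of 𝒞, let 𝒫 be the set of positive circuits of 𝒞' with respect to 𝒞, and let K = (⋂_{(C,r) ∈ ℛ} K(C, r)) ∩ (⋂_{P ∈ 𝒫} K(P)). Then for every X ∈ 𝒞', the orthant 𝒪(X) intersects K, i.e., there exists a point x ∈ K with x_e > 0 for all e ∈ X and x_e < 0 for all e ∈ U \ X. -/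
open Finset

open Classical in
noncomputable def chainStep {α : Type*} [DecidableEq α]
    (𝒞 : Set (Finset α)) (Z : Finset α) : Finset α :=
  if h : ∃ e, e ∉ Z ∧ insert e Z ∈ 𝒞 then insert h.choose Z else Z

noncomputable def chainF {α : Type*} [DecidableEq α]
    (𝒞 : Set (Finset α)) (X : Finset α) : ℕ → Finset α
  | 0 => X
  | (i+1) => chainStep 𝒞 (chainF 𝒞 X i)

theorem chainF_mem {α : Type*} [Fintype α] [DecidableEq α] {𝒞 : Set (Finset α)}
    (hCG : IsConvexGeometry 𝒞) {X : Finset α} (hX : X ∈ 𝒞) (i : ℕ) :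
    chainF 𝒞 X i ∈ 𝒞 := by
  induction i with
  | zero => exact hX
  | succ i ih =>
    show chainStep 𝒞 (chainF 𝒞 X i) ∈ 𝒞
    unfold chainStep
    split
    · next h => exact h.choose_spec.2
    · exact ih

theorem chainF_subset_succ {α : Type*} [DecidableEq α] (𝒞 : Set (Finset α))
    (X : Finset α) (i : ℕ) : chainF 𝒞 X i ⊆ chainF 𝒞 X (i+1) := by
  show chainF 𝒞 X i ⊆ chainStep 𝒞 (chainF 𝒞 X i)
  unfold chainStep
  split
  · exact subset_insert _ _
  · exact Subset.rfl

theorem chainF_mono {α : Type*} [DecidableEq α] (𝒞 : Set (Finset α))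
    (X : Finset α) : Monotone (chainF 𝒞 X) :=
  monotone_nat_of_le_succ (chainF_subset_succ 𝒞 X)

theorem chainF_card {α : Type*} [Fintype α] [DecidableEq α] {𝒞 : Set (Finset α)}
    (hCG : IsConvexGeometry 𝒞) {X : Finset α} (hX : X ∈ 𝒞) (i : ℕ)
    (h : chainF 𝒞 X i ≠ univ) :
    (chainF 𝒞 X (i+1)).card = (chainF 𝒞 X i).card + 1 := by
  have hex : ∃ e, e ∉ chainF 𝒞 X i ∧ insert e (chainF 𝒞 X i) ∈ 𝒞 := by
    obtain ⟨e, he, hmem⟩ := hCG.2.2.2 _ (chainF_mem hCG hX i) h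
    exact ⟨e, he, hmem⟩
  show (chainStep 𝒞 (chainF 𝒞 X i)).card = _
  unfold chainStep
  rw [dif_pos hex]
  exact card_insert_of_notMem hex.choose_spec.1

theorem chainF_univ {α : Type*} [Fintype α] [DecidableEq α] {𝒞 : Set (Finset α)}
    (hCG : IsConvexGeometry 𝒞) {X : Finset α} (hX : X ∈ 𝒞) :
    chainF 𝒞 X (Fintype.card α) = univ := by
  have key : ∀ i, chainF 𝒞 X i = univ ∨ i ≤ (chainF 𝒞 X i).card := by
    intro i
    induction i with
    | zero => exact Or.inr (Nat.zero_le _)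
    | succ i ih =>
      rcases ih with h | h
      · left
        have : chainF 𝒞 X i ⊆ chainF 𝒞 X (i+1) := chainF_subset_succ 𝒞 X i
        rw [h] at this
        exact univ_subset_iff.mp this
      · by_cases hu : chainF 𝒞 X i = univ
        · left
          have : chainF 𝒞 X i ⊆ chainF 𝒞 X (i+1) := chainF_subset_succ 𝒞 X i
          rw [hu] at this
          exact univ_subset_iff.mp this
        · right
          rw [chainF_card hCG hX i hu]
          omega
  rcases key (Fintype.card α) with h | h
  · exact h
  · exact eq_univ_of_card _ (le_antisymm (card_le_univ _) h)


/-- For an ideal `𝒞'` of a convex geometry `𝒞` and every `X ∈ 𝒞'`, the orthant `𝒪(X)`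
meets `K = (⋂ K(C,r) over rooted circuits) ∩ (⋂ K(P) over positive circuits)`. -/
theorem orthant_of_ideal_member_meets_K
    {α : Type*} [Fintype α] [DecidableEq α] (𝒞 𝒞' : Set (Finset α))
    (hCG : IsConvexGeometry 𝒞) (hsub : 𝒞' ⊆ 𝒞)
    (hideal : ∀ X ∈ 𝒞, (∃ Y ∈ 𝒞', X ⊆ Y) → X ∈ 𝒞') :
    ∀ X ∈ 𝒞',
      (Orthant X ∩
        ({x : α → ℝ | ∀ C r, IsRootedCircuit 𝒞 C r → x ∈ Kcr C r} ∩
          {x : α → ℝ | ∀ P : Finset α, IsPositiveCircuit 𝒞' P →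
            (∑ e ∈ P, x e) < 0})).Nonempty := by
  classical
  intro X hX
  have hXC : X ∈ 𝒞 := hsub hX
  set n := Fintype.card α with hn
  have hfuniv : chainF 𝒞 X n = univ := chainF_univ hCG hXC
  have hf0 : chainF 𝒞 X 0 = X := rfl
  have hmono := chainF_mono 𝒞 X
  have hmemall : ∀ e : α, ∃ i, e ∈ chainF 𝒞 X i :=
    fun e => ⟨n, by rw [hfuniv]; exact mem_univ e⟩
  set pos : α → ℕ := fun e => Nat.find (hmemall e) with hposdef
  have hposmem : ∀ e, e ∈ chainF 𝒞 X (pos e) := fun e => Nat.find_spec (hmemall e)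
  have hposnot : ∀ e i, i < pos e → e ∉ chainF 𝒞 X i :=
    fun e i hi => Nat.find_min (hmemall e) hi
  have hpos1 : ∀ e ∉ X, 1 ≤ pos e := by
    intro e he
    rcases Nat.eq_zero_or_pos (pos e) with h | h
    · have hh := hposmem e
      rw [h, hf0] at hh
      exact absurd hh he
    · exact h
  have hinj : ∀ a b, a ∉ X → pos a = pos b → a = b := by
    intro a b ha hab
    have h1 : 1 ≤ pos a := hpos1 a ha
    have hb : b ∈ chainF 𝒞 X (pos a) := by rw [hab]; exact hposmem b
    have han : a ∉ chainF 𝒞 X (pos a - 1) := hposnot a _ (by omega)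
    have ha' : a ∈ chainF 𝒞 X (pos a) := hposmem a
    have hbn : b ∉ chainF 𝒞 X (pos a - 1) := by
      rw [hab] at h1 ⊢
      exact hposnot b _ (by omega)
    have hstep : chainF 𝒞 X (pos a) = chainStep 𝒞 (chainF 𝒞 X (pos a - 1)) := by
      conv_lhs => rw [show pos a = (pos a - 1) + 1 by omega]
      rfl
    rw [hstep] at ha' hb
    unfold chainStep at ha' hb
    by_cases hex : ∃ e, e ∉ chainF 𝒞 X (pos a - 1) ∧ insert e (chainF 𝒞 X (pos a - 1)) ∈ 𝒞
    · rw [dif_pos hex] at ha' hb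
      rcases mem_insert.mp ha' with h | h
      · rcases mem_insert.mp hb with h' | h'
        · rw [h, h']
        · exact absurd h' hbn
      · exact absurd h han
    · rw [dif_neg hex] at ha'
      exact absurd ha' han
  -- the key structural fact
  have key : ∀ S : Finset α, (S \ X).Nonempty →
      ∃ es, es ∈ S ∧ es ∉ X ∧ (∀ b ∈ S \ X, pos b ≤ pos es) ∧
        chainF 𝒞 X (pos es - 1) ∩ S = S.erase es := by
    intro S hS
    obtain ⟨e, hemem, hemax⟩ := Finset.exists_max_image (S \ X) pos hS
    have heS : e ∈ S := (mem_sdiff.mp hemem).1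
    have heX : e ∉ X := (mem_sdiff.mp hemem).2
    refine ⟨e, heS, heX, hemax, ?_⟩
    ext a
    simp only [mem_inter, mem_erase]
    constructor
    · rintro ⟨hfa, hSa⟩
      refine ⟨fun h => ?_, hSa⟩
      subst h
      exact hposnot a _ (by have := hpos1 a heX; omega) hfa
    · rintro ⟨hne, hSa⟩
      refine ⟨?_, hSa⟩
      by_cases haX : a ∈ X
      · exact hmono (Nat.zero_le _) (hf0 ▸ haX)
      · have h1 : pos a ≤ pos e := hemax a (mem_sdiff.mpr ⟨hSa, haX⟩)
        have h2 : pos a ≠ pos e := fun h => hne (hinj a e haX h)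
        exact hmono (by omega : pos a ≤ pos e - 1) (hposmem a)
  -- the witness point
  set x : α → ℝ := fun e => if e ∈ X then 1 else -((n : ℝ) + 1) ^ (pos e) with hxdef
  have hsum : ∀ S : Finset α,
      ∑ e ∈ S, x e = (#(S ∩ X) : ℝ) - ∑ e ∈ S \ X, ((n : ℝ) + 1) ^ (pos e) := by
    intro S
    rw [← Finset.sum_inter_add_sum_sdiff S X x]
    have h1 : ∑ e ∈ S ∩ X, x e = (#(S ∩ X) : ℝ) := by
      rw [Finset.sum_congr rfl (fun e he => if_pos (mem_inter.mp he).2)]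
      simp
    have h2 : ∑ e ∈ S \ X, x e = - ∑ e ∈ S \ X, ((n : ℝ) + 1) ^ (pos e) := by
      rw [Finset.sum_congr rfl (fun e he => if_neg (mem_sdiff.mp he).2), Finset.sum_neg_distrib]
    rw [h1, h2]
    ring
  have hone : (1 : ℝ) ≤ (n : ℝ) + 1 := by
    have : (0 : ℝ) ≤ (n : ℝ) := Nat.cast_nonneg n
    linarith
  refine ⟨x, ⟨?_, ?_⟩, ?_, ?_⟩
  · -- positive on X
    intro e he
    show (0 : ℝ) < if e ∈ X then 1 else -((n : ℝ) + 1) ^ (pos e)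
    rw [if_pos he]
    norm_num
  · -- negative off X
    intro e he
    show (if e ∈ X then (1:ℝ) else -((n : ℝ) + 1) ^ (pos e)) < 0
    rw [if_neg he]
    have : (0 : ℝ) < ((n : ℝ) + 1) ^ (pos e) := by positivity
    linarith
  · -- rooted circuits
    rintro C r ⟨hrC, htr⟩
    show ∑ e ∈ C.erase r, x e < (n : ℝ) * x r
    rw [hsum]
    have hpownn : (0 : ℝ) ≤ ∑ e ∈ (C.erase r) \ X, ((n : ℝ) + 1) ^ (pos e) :=
      Finset.sum_nonneg (fun i _ => by positivity)
    by_cases hrX : r ∈ X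
    · have hxr : x r = 1 := if_pos hrX
      rw [hxr, mul_one]
      have hc : #((C.erase r) ∩ X) ≤ #(univ.erase r) :=
        card_le_card (fun a ha =>
          mem_erase.mpr ⟨(mem_erase.mp (mem_inter.mp ha).1).1, mem_univ a⟩)
      rw [card_erase_of_mem (mem_univ r), card_univ, ← hn] at hc
      have hn1 : 1 ≤ n := Fintype.card_pos_iff.mpr ⟨r⟩
      have hc' : #((C.erase r) ∩ X) + 1 ≤ n := by omega
      have hc'' : (#((C.erase r) ∩ X) : ℝ) + 1 ≤ (n : ℝ) := by exact_mod_cast hc'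
      linarith
    · have hrCX : (C \ X).Nonempty := ⟨r, mem_sdiff.mpr ⟨hrC, hrX⟩⟩
      obtain ⟨es, hesC, hesX, hesmax, hestr⟩ := key C hrCX
      have hner : es ≠ r := by
        have hm : C.erase es ∈ {Y : Finset α | Y ⊆ C ∧ Y ≠ C.erase r} := by
          rw [← htr]
          exact ⟨chainF 𝒞 X (pos es - 1), chainF_mem hCG hXC _, hestr⟩
        intro h
        exact hm.2 (by rw [h])
      have hlt : pos r < pos es := by
        have h1 : pos r ≤ pos es := hesmax r (mem_sdiff.mpr ⟨hrC, hrX⟩)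
        rcases h1.lt_or_eq with h | h
        · exact h
        · exact absurd (hinj r es hrX h) (fun h' => hner h'.symm)
      have hesmem : es ∈ (C.erase r) \ X :=
        mem_sdiff.mpr ⟨mem_erase.mpr ⟨hner, hesC⟩, hesX⟩
      have hxr : x r = -((n : ℝ) + 1) ^ (pos r) := if_neg hrX
      rw [hxr]
      have h1 : ((n : ℝ) + 1) ^ (pos es) ≤ ∑ e ∈ (C.erase r) \ X, ((n : ℝ) + 1) ^ (pos e) :=
        Finset.single_le_sum (f := fun e => ((n:ℝ)+1)^(pos e)) (fun i _ => by positivity) hesmem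
      have h2 : ((n : ℝ) + 1) ^ (pos r + 1) ≤ ((n : ℝ) + 1) ^ (pos es) :=
        pow_le_pow_right₀ hone (by omega)
      rw [pow_succ] at h2
      have h3 : (#((C.erase r) ∩ X) : ℝ) ≤ (n : ℝ) := by
        have h := card_le_univ ((C.erase r) ∩ X)
        exact_mod_cast h
      have h4 : (n : ℝ) + 1 ≤ ((n : ℝ) + 1) ^ (pos r) :=
        le_self_pow₀ hone (by have := hpos1 r hrX; omega)
      nlinarith [h1, h2, h3, h4]
  · -- positive circuits
    intro P hPC
    have hne : (P \ X).Nonempty := by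
      rw [sdiff_nonempty]
      intro hPX
      have hm : P ∈ {Y : Finset α | Y ⊆ P ∧ Y ≠ P} := by
        rw [← hPC]
        exact ⟨X, hX, inter_eq_right.mpr hPX⟩
      exact hm.2 rfl
    obtain ⟨e0, he0⟩ := hne
    rw [hsum]
    have h1 : ((n : ℝ) + 1) ^ (pos e0) ≤ ∑ e ∈ P \ X, ((n : ℝ) + 1) ^ (pos e) :=
      Finset.single_le_sum (f := fun e => ((n:ℝ)+1)^(pos e)) (fun i _ => by positivity) he0
    have h2 : (n : ℝ) + 1 ≤ ((n : ℝ) + 1) ^ (pos e0) :=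
      le_self_pow₀ hone (by have := hpos1 e0 (mem_sdiff.mp he0).2; omega)
    have h3 : (#(P ∩ X) : ℝ) ≤ (n : ℝ) := by
      have h := card_le_univ (P ∩ X)
      exact_mod_cast h
    linarith
end

section
/- Let (U, 𝒞) be a convex geometry with n = |U|, let ℛ₀ be its set of critical rooted circuits, and let K(ℛ₀) = ⋂_{(C,r) ∈ ℛ₀} K(C, r). For every Y ⊆ U with Y ∉ 𝒞, there exist a set A ⊆ U, an element r ∈ A, and real numbers (a_g)_{g ∈ A \ {r}} such that: (1) Y ∩ A = A \ {r}; (2) 0 < a_g ≤ 1/|Y| for each g ∈ A \ {r}; and (3) for every x ∈ K(ℛ₀), x_r > Σ_{g ∈ A \ {r}} a_g · x_g. -/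
open Finset

namespace CGaux

variable {α : Type*} [Fintype α] [DecidableEq α] {𝒞 : Set (Finset α)}

open Classical in
/-- The closure (convex hull) operator of the convex geometry. -/
noncomputable def convC (𝒞 : Set (Finset α)) (A : Finset α) : Finset α :=
  (Finset.univ.filter (fun X : Finset α => X ∈ 𝒞 ∧ A ⊆ X)).inf id

lemma inf_mem_C (hCG : IsConvexGeometry 𝒞) (s : Finset (Finset α))
    (hs : ∀ X ∈ s, X ∈ 𝒞) : s.inf id ∈ 𝒞 := by
  induction s using Finset.induction_on with
  | empty => simpa [Finset.inf_empty, Finset.top_eq_univ] using hCG.2.1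
  | @insert X s hX ih =>
    rw [Finset.inf_insert]
    have h1 : X ∈ 𝒞 := hs X (Finset.mem_insert_self _ _)
    have h2 : s.inf id ∈ 𝒞 := ih (fun Z hZ => hs Z (Finset.mem_insert_of_mem hZ))
    simpa [Finset.inf_eq_inter] using hCG.2.2.1 X h1 _ h2

lemma convC_mem (hCG : IsConvexGeometry 𝒞) (A : Finset α) : convC 𝒞 A ∈ 𝒞 := by
  classical
  apply inf_mem_C hCG
  intro X hX
  exact (Finset.mem_filter.1 hX).2.1

lemma subset_convC (A : Finset α) : A ⊆ convC 𝒞 A := by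
  classical
  show A ≤ _
  apply Finset.le_inf
  intro X hX
  exact (Finset.mem_filter.1 hX).2.2

lemma convC_subset {X : Finset α} (hX : X ∈ 𝒞) {A : Finset α} (hAX : A ⊆ X) :
    convC 𝒞 A ⊆ X := by
  classical
  show _ ≤ X
  have : X ∈ Finset.univ.filter (fun X : Finset α => X ∈ 𝒞 ∧ A ⊆ X) := by
    simp only [Finset.mem_filter]
    exact ⟨Finset.mem_univ X, hX, hAX⟩
  exact Finset.inf_le this

lemma convC_mono (hCG : IsConvexGeometry 𝒞) {A B : Finset α} (h : A ⊆ B) :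
    convC 𝒞 A ⊆ convC 𝒞 B :=
  convC_subset (convC_mem hCG B) (h.trans (subset_convC B))

lemma exists_maxcard (P : Finset α → Prop) (h : ∃ G, P G) :
    ∃ G, P G ∧ ∀ G', P G' → G'.card ≤ G.card := by
  classical
  obtain ⟨G0, hG0⟩ := h
  obtain ⟨G, hG, hmax⟩ := Finset.exists_max_image (Finset.univ.filter P) Finset.card
    ⟨G0, by simp [hG0]⟩
  exact ⟨G, by simpa using (Finset.mem_filter.1 hG).2,
    fun G' hG' => hmax G' (by simp [hG'])⟩

lemma exists_mincard (P : Finset α → Prop) (h : ∃ G, P G) :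
    ∃ G, P G ∧ ∀ G', P G' → G.card ≤ G'.card := by
  classical
  obtain ⟨G0, hG0⟩ := h
  obtain ⟨G, hG, hmin⟩ := Finset.exists_min_image (Finset.univ.filter P) Finset.card
    ⟨G0, by simp [hG0]⟩
  exact ⟨G, by simpa using (Finset.mem_filter.1 hG).2,
    fun G' hG' => hmin G' (by simp [hG'])⟩

lemma extension (hCG : IsConvexGeometry 𝒞) {X Z : Finset α} (hX : X ∈ 𝒞) (hZ : Z ∈ 𝒞)
    (hXZ : X ⊆ Z) (hne : X ≠ Z) : ∃ e ∈ Z, e ∉ X ∧ insert e X ∈ 𝒞 := by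
  classical
  obtain ⟨X', ⟨hX'C, hX'Z⟩, hmax⟩ := exists_maxcard (fun X' => X' ∈ 𝒞 ∧ X' ∩ Z = X)
    ⟨X, hX, Finset.inter_eq_left.2 hXZ⟩
  have hXX' : X ⊆ X' := hX'Z ▸ Finset.inter_subset_left
  have hX'u : X' ≠ Finset.univ := by
    intro h
    apply hne
    rw [← hX'Z, h, Finset.univ_inter]
  obtain ⟨e, he, heC⟩ := hCG.2.2.2 X' hX'C hX'u
  by_cases heZ : e ∈ Z
  · refine ⟨e, heZ, fun hc => he (hXX' hc), ?_⟩
    have heq : insert e X' ∩ Z = insert e X := by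
      rw [Finset.insert_inter_of_mem heZ, hX'Z]
    exact heq ▸ hCG.2.2.1 _ heC _ hZ
  · exfalso
    have hmem := hmax (insert e X')
      ⟨heC, by rw [Finset.insert_inter_of_notMem heZ, hX'Z]⟩
    have : X'.card < (insert e X').card := by
      rw [Finset.card_insert_of_notMem he]; omega
    omega

lemma anti_exchange (hCG : IsConvexGeometry 𝒞) {A : Finset α} {t b : α} (htb : t ≠ b)
    (ht : t ∉ convC 𝒞 A) (hb : b ∉ convC 𝒞 A) (hbt : b ∈ convC 𝒞 (insert t A)) :
    t ∉ convC 𝒞 (insert b A) := by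
  classical
  intro htb'
  set T := convC 𝒞 (insert t (insert b A)) with hT
  obtain ⟨G, ⟨hGC, hAG, hGT, htG, hbG⟩, hmax⟩ :=
    exists_maxcard (fun G => G ∈ 𝒞 ∧ convC 𝒞 A ⊆ G ∧ G ⊆ T ∧ t ∉ G ∧ b ∉ G)
      ⟨convC 𝒞 A, convC_mem hCG A, subset_rfl,
        convC_mono hCG (by intro a ha; exact Finset.mem_insert_of_mem (Finset.mem_insert_of_mem ha)),
        ht, hb⟩
  have htT : t ∈ T := subset_convC _ (Finset.mem_insert_self _ _)
  have hne : G ≠ T := fun h => htG (h ▸ htT)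
  obtain ⟨e, heT, heG, heC⟩ := extension hCG hGC (convC_mem hCG _) hGT hne
  have hsub : convC 𝒞 (insert e A) ⊆ insert e G :=
    convC_subset heC (Finset.insert_subset_insert e ((subset_convC A).trans hAG))
  by_cases het : e = t
  · subst het
    have hbmem : b ∈ insert e G := hsub hbt
    rcases Finset.mem_insert.1 hbmem with h | h
    · exact htb h.symm
    · exact hbG h
  by_cases heb : e = b
  · subst heb
    have htmem : t ∈ insert e G := hsub htb'
    rcases Finset.mem_insert.1 htmem with h | h
    · exact htb h
    · exact htG h
  · have hmem := hmax (insert e G)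
      ⟨heC, hAG.trans (Finset.subset_insert _ _), Finset.insert_subset heT hGT,
        by simp [Ne.symm het, htG] , by simp [Ne.symm heb, hbG]⟩
    have : G.card < (insert e G).card := by
      rw [Finset.card_insert_of_notMem heG]; omega
    omega


section S2


variable {α : Type*} [Fintype α] [DecidableEq α] {𝒞 : Set (Finset α)}

/-- From a minimal `Z₀ ⊆ B` (where every member of `Z₀` can be doubly erased)
with `t ∈ conv Z₀`, the pair `(insert t Z₀, t)` is a critical rooted circuit. -/
lemma critical_of_minimal (hCG : IsConvexGeometry 𝒞) {D : Finset α} (hD : D ∈ 𝒞)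
    {t : α} (ht : t ∈ D) {Z₀ : Finset α} (hZ₀W : Z₀ ⊆ (D.erase t))
    (hWb : ∀ b ∈ Z₀, (D.erase t).erase b ∈ 𝒞)
    (htZ₀ : t ∈ convC 𝒞 Z₀)
    (hminb : ∀ b ∈ Z₀, t ∉ convC 𝒞 (Z₀.erase b)) :
    IsCriticalRootedCircuit 𝒞 (insert t Z₀) t := by
  classical
  have htW : t ∉ D.erase t := Finset.notMem_erase _ _
  have htZ₀mem : t ∉ Z₀ := fun h => htW (hZ₀W h)
  have hCeq : (insert t Z₀).erase t = Z₀ := Finset.erase_insert htZ₀mem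
  have hZ₀D : Z₀ ⊆ D := hZ₀W.trans (Finset.erase_subset _ _)
  have hD₆D : convC 𝒞 Z₀ ⊆ D := convC_subset hD hZ₀D
  constructor
  · -- rooted circuit
    refine ⟨Finset.mem_insert_self _ _, ?_⟩
    ext S
    simp only [Set.mem_setOf_eq]
    constructor
    · rintro ⟨X, hXC, rfl⟩
      refine ⟨Finset.inter_subset_right, ?_⟩
      rw [hCeq]
      intro hSe
      have hZ₀X : Z₀ ⊆ X := by
        intro z hz
        have hzz : z ∈ X ∩ insert t Z₀ := by rw [hSe]; exact hz
        exact (Finset.mem_inter.1 hzz).1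
      have htX : t ∈ X := convC_subset hXC hZ₀X htZ₀
      have : t ∈ X ∩ insert t Z₀ := Finset.mem_inter.2 ⟨htX, Finset.mem_insert_self _ _⟩
      rw [hSe] at this
      exact htZ₀mem this
    · rintro ⟨hSC, hSne⟩
      rw [hCeq] at hSne
      refine ⟨convC 𝒞 S, convC_mem hCG S, ?_⟩
      apply Finset.Subset.antisymm
      · intro g hg
        obtain ⟨hgconv, hgC⟩ := Finset.mem_inter.1 hg
        by_contra hgS
        by_cases htS : t ∈ S
        · have hgt : g ≠ t := fun h => hgS (h ▸ htS)
          have hgZ₀ : g ∈ Z₀ := (Finset.mem_insert.1 hgC).resolve_left hgt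
          have h1 : g ∉ convC 𝒞 (Z₀.erase g) := by
            intro hc
            have hsub : convC 𝒞 (Z₀.erase g) ⊆ (D.erase t).erase g :=
              convC_subset (hWb g hgZ₀) (Finset.erase_subset_erase g hZ₀W)
            exact Finset.notMem_erase g _ (hsub hc)
          have h2 : t ∉ convC 𝒞 (Z₀.erase g) := hminb g hgZ₀
          have h3 : g ∈ convC 𝒞 (insert t (Z₀.erase g)) := by
            have hsub : S ⊆ insert t (Z₀.erase g) := by
              intro s hs
              rcases Finset.mem_insert.1 (hSC hs) with h | h
              · exact h ▸ Finset.mem_insert_self _ _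
              · exact Finset.mem_insert_of_mem
                  (Finset.mem_erase.2 ⟨fun hh => hgS (hh ▸ hs), h⟩)
            exact convC_mono hCG hsub hgconv
          have h4 := anti_exchange hCG (fun h => hgt h.symm) h2 h1 h3
          rw [Finset.insert_erase hgZ₀] at h4
          exact h4 htZ₀
        · have hSZ₀ : S ⊆ Z₀ := fun s hs =>
            (Finset.mem_insert.1 (hSC hs)).resolve_left (fun h => htS (h ▸ hs))
          obtain ⟨b, hbZ₀, hbS⟩ : ∃ b ∈ Z₀, b ∉ S := by
            by_contra h
            push_neg at h
            exact hSne (Finset.Subset.antisymm hSZ₀ h)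
          by_cases hgt : g = t
          · subst hgt
            have hsub : convC 𝒞 S ⊆ convC 𝒞 (Z₀.erase b) :=
              convC_mono hCG (fun s hs => Finset.mem_erase.2 ⟨fun hh => hbS (hh ▸ hs), hSZ₀ hs⟩)
            exact hminb b hbZ₀ (hsub hgconv)
          · have hgZ₀ : g ∈ Z₀ := (Finset.mem_insert.1 hgC).resolve_left hgt
            have hsub : convC 𝒞 S ⊆ (D.erase t).erase g :=
              convC_subset (hWb g hgZ₀)
                (fun s hs => Finset.mem_erase.2 ⟨fun hh => hgS (hh ▸ hs), hZ₀W (hSZ₀ hs)⟩)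
            exact Finset.notMem_erase g _ (hsub hgconv)
      · exact Finset.subset_inter (subset_convC S) hSC
  · -- criticality
    refine ⟨convC 𝒞 Z₀, convC_mem hCG Z₀, ?_, ?_, ?_, ?_⟩
    · intro c hc
      rcases Finset.mem_insert.1 hc with h | h
      · exact h ▸ htZ₀
      · exact subset_convC Z₀ h
    · intro D' hD' hCD'
      exact convC_subset hD' (fun z hz => hCD' (Finset.mem_insert_of_mem hz))
    · intro hcon
      have hsub : convC 𝒞 Z₀ ⊆ (convC 𝒞 Z₀).erase t :=
        convC_subset hcon
          (fun z hz => Finset.mem_erase.2 ⟨fun hh => htZ₀mem (hh ▸ hz), subset_convC Z₀ hz⟩)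
      exact Finset.notMem_erase t _ (hsub htZ₀)
    · intro b hb
      rw [hCeq] at hb
      have heq : ((convC 𝒞 Z₀).erase t).erase b = convC 𝒞 Z₀ ∩ ((D.erase t).erase b) := by
        ext x
        simp only [Finset.mem_erase, Finset.mem_inter]
        constructor
        · rintro ⟨hxb, hxt, hx⟩
          exact ⟨hx, hxb, hxt, hD₆D hx⟩
        · rintro ⟨hx, hxb, hxt, _⟩
          exact ⟨hxb, hxt, hx⟩
      rw [heq]
      exact hCG.2.2.1 _ (convC_mem hCG Z₀) _ (hWb b hb)

lemma exists_critical (hCG : IsConvexGeometry 𝒞) :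
    ∀ N, ∀ D : Finset α, D.card ≤ N → D ∈ 𝒞 → ∀ t ∈ D, D.erase t ∉ 𝒞 →
      ∃ C, C ⊆ D ∧ IsCriticalRootedCircuit 𝒞 C t := by
  intro N
  induction N with
  | zero =>
    intro D hDcard _ t ht _
    rw [Nat.le_zero, Finset.card_eq_zero] at hDcard
    simp [hDcard] at ht
  | succ N ih =>
    intro D hDcard hD t ht hW
    classical
    set W := D.erase t with hWdef
    set B := W.filter (fun b => W.erase b ∈ 𝒞) with hBdef
    have hBW : B ⊆ W := Finset.filter_subset _ _
    have hWb : ∀ b ∈ B, W.erase b ∈ 𝒞 := fun b hb => (Finset.mem_filter.1 hb).2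
    by_cases htB : t ∈ convC 𝒞 B
    · -- case (i): build critical circuit directly
      obtain ⟨Z₀, ⟨hZ₀B, htZ₀⟩, hmin⟩ :=
        exists_mincard (fun Z => Z ⊆ B ∧ t ∈ convC 𝒞 Z) ⟨B, subset_rfl, htB⟩
      have hminb : ∀ b ∈ Z₀, t ∉ convC 𝒞 (Z₀.erase b) := by
        intro b hb hcontra
        have h1 := hmin (Z₀.erase b) ⟨(Finset.erase_subset _ _).trans hZ₀B, hcontra⟩
        have h2 : (Z₀.erase b).card < Z₀.card := Finset.card_erase_lt_of_mem hb
        omega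
      refine ⟨insert t Z₀, ?_, ?_⟩
      · exact Finset.insert_subset ht ((hZ₀B.trans hBW).trans (Finset.erase_subset _ _))
      · exact critical_of_minimal hCG hD ht (hZ₀B.trans hBW)
          (fun b hb => hWb b (hZ₀B hb)) htZ₀ hminb
    · -- case (ii): recurse into a smaller convex set
      have hFW : convC 𝒞 B ⊆ W := by
        intro x hx
        have hxD : x ∈ D := convC_subset hD (hBW.trans (Finset.erase_subset _ _)) hx
        exact Finset.mem_erase.2 ⟨fun h => htB (h ▸ hx), hxD⟩
      obtain ⟨G, ⟨hGC, hFG, hGW⟩, hGmax⟩ :=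
        exists_maxcard (fun G => G ∈ 𝒞 ∧ convC 𝒞 B ⊆ G ∧ G ⊆ W)
          ⟨convC 𝒞 B, convC_mem hCG B, subset_rfl, hFW⟩
      have htG : t ∉ G := fun h => Finset.notMem_erase t D (hGW h)
      have hGD : G ⊆ D := hGW.trans (Finset.erase_subset _ _)
      have hGneD : G ≠ D := fun h => htG (h ▸ ht)
      obtain ⟨e, heD, heG, heC⟩ := extension hCG hGC hD hGD hGneD
      have het : e = t := by
        by_contra hne
        have hmem := hGmax (insert e G)
          ⟨heC, hFG.trans (Finset.subset_insert _ _),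
            Finset.insert_subset (Finset.mem_erase.2 ⟨hne, heD⟩) hGW⟩
        have : G.card < (insert e G).card := by
          rw [Finset.card_insert_of_notMem heG]; omega
        omega
      subst het
      -- now `insert e G ∈ 𝒞` is `insert t G`
      obtain ⟨K, ⟨hKC, hHK, hKD, hKW⟩, hKmin⟩ :=
        exists_mincard (fun K => K ∈ 𝒞 ∧ insert e G ⊆ K ∧ K ⊆ D ∧ K.erase e ∉ 𝒞)
          ⟨D, hD, Finset.insert_subset ht hGD, subset_rfl, hW⟩
      have htK : e ∈ K := hHK (Finset.mem_insert_self _ _)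
      have hHneK : insert e G ≠ K := by
        intro h
        apply hKW
        rw [← h, Finset.erase_insert htG]
        exact hGC
      obtain ⟨K₁, ⟨hK₁C, hHK₁, hK₁K, hK₁ne⟩, hK₁max⟩ :=
        exists_maxcard (fun K₁ => K₁ ∈ 𝒞 ∧ insert e G ⊆ K₁ ∧ K₁ ⊆ K ∧ K₁ ≠ K)
          ⟨insert e G, heC, subset_rfl, hHK, hHneK⟩
      obtain ⟨e', he'K, he'K₁, he'C⟩ := extension hCG hK₁C hKC hK₁K hK₁ne
      have hKe : insert e' K₁ = K := by
        by_contra h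
        have hmem := hK₁max (insert e' K₁)
          ⟨he'C, hHK₁.trans (Finset.subset_insert _ _), Finset.insert_subset he'K hK₁K, h⟩
        have : K₁.card < (insert e' K₁).card := by
          rw [Finset.card_insert_of_notMem he'K₁]; omega
        omega
      have he't : e' ≠ e := fun h => he'K₁ (h ▸ hHK₁ (Finset.mem_insert_self _ _))
      have hM : K₁.erase e ∈ 𝒞 := by
        by_contra hMc
        have h1 := hKmin K₁ ⟨hK₁C, hHK₁, hK₁K.trans hKD, hMc⟩
        have h2 : K₁.card < K.card := Finset.card_lt_card (ssubset_of_subset_of_ne hK₁K hK₁ne)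
        omega
      have hKne : K ≠ D := by
        intro h
        have hK₁eq : K₁ = K.erase e' := by
          rw [← hKe, Finset.erase_insert he'K₁]
        have hMW : K₁.erase e = W.erase e' := by
          rw [hK₁eq, h, hWdef, Finset.erase_right_comm]
        have he'B : e' ∈ B := by
          rw [hBdef]
          refine Finset.mem_filter.2 ⟨?_, hMW ▸ hM⟩
          exact Finset.mem_erase.2 ⟨he't, h ▸ he'K⟩
        exact he'K₁ (hHK₁ (Finset.mem_insert_of_mem (hFG (subset_convC B he'B))))
      have hKcard : K.card < D.card := Finset.card_lt_card (ssubset_of_subset_of_ne hKD hKne)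
      obtain ⟨C, hCK, hcrit⟩ := ih K (by omega) hKC e htK hKW
      exact ⟨C, hCK.trans hKD, hcrit⟩


end S2
section S3


variable {α : Type*} [Fintype α] [DecidableEq α]

lemma NUM (Y : Finset α) (P : (α → ℝ) → Prop) :
    ∀ R : Finset α, Disjoint Y R →
    ∀ (c : α → ℝ) (b : α → α → ℝ),
    (∀ t ∈ R, ∀ x, P x → 0 < c t * x t - ∑ g, b t g * x g) →
    (∀ t ∈ R, ∀ g, 0 ≤ b t g) →
    (∀ t ∈ R, ∑ g, b t g < c t) →
    (∀ t ∈ R, b t t = 0) →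
    (∀ t ∈ R, ∀ g, g ∉ Y → g ∉ R → b t g = 0) →
    ∃ a : α → α → ℝ,
      (∀ t ∈ R, ∀ g, 0 ≤ a t g) ∧
      (∀ t ∈ R, ∀ g, g ∉ Y → a t g = 0) ∧
      (∀ t ∈ R, ∀ x, P x → ∑ g, a t g * x g < x t) ∧
      (∀ t ∈ R, ∀ y ∈ Y, c t * a t y ≤ b t y + ∑ u ∈ R.erase t, b t u * a u y) := by
  intro R
  induction R using Finset.induction_on with
  | empty =>
    intro _ c b _ _ _ _ _
    exact ⟨fun _ _ => 0, by simp, by simp, by simp, by simp⟩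
  | @insert u R hu ihR =>
    intro hdisj c b h1 h2 h3 h4 h5
    classical
    have huY : u ∉ Y := (Finset.disjoint_insert_right.1 hdisj).1
    have hdisjR : Disjoint Y R := (Finset.disjoint_insert_right.1 hdisj).2
    have huR : u ∈ insert u R := Finset.mem_insert_self _ _
    have hbu_nonneg : ∀ g, 0 ≤ b u g := h2 u huR
    have hcu_pos : 0 < c u :=
      lt_of_le_of_lt (Finset.sum_nonneg (fun g _ => hbu_nonneg g)) (h3 u huR)
    -- new data after eliminating `u`
    set c' : α → ℝ := fun t => c u * c t - b t u * b u t with hc'def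
    set b' : α → α → ℝ := fun t g =>
      c u * b t g + b t u * b u g - (if g = t then b t u * b u t else 0)
        - (if g = u then c u * b t u else 0) with hb'def
    have hmemR : ∀ t ∈ R, t ∈ insert u R := fun t ht => Finset.mem_insert_of_mem ht
    have htne : ∀ t ∈ R, t ≠ u := fun t ht h => hu (h ▸ ht)
    -- sum identity
    have hbt0 : ∀ t ∈ R, b' t t = 0 := by
      intro t ht
      simp [hb'def, if_neg (htne t ht), h4 t (hmemR t ht)]
    have hbu0 : ∀ t ∈ R, b' t u = 0 := by
      intro t ht
      simp [hb'def, if_neg (Ne.symm (htne t ht)), h4 u huR]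
    have hbval : ∀ (t g : α), g ≠ t → g ≠ u → b' t g = c u * b t g + b t u * b u g := by
      intro t g hgt hgu
      simp only [hb'def, if_neg hgt, if_neg hgu]
      ring
    have hsum : ∀ t ∈ R, ∀ x : α → ℝ,
        ∑ g, b' t g * x g = c u * (∑ g, b t g * x g) + b t u * (∑ g, b u g * x g)
          - b t u * b u t * x t - c u * b t u * x u := by
      intro t ht x
      have expand : ∀ g, b' t g * x g =
          (c u * (b t g * x g) + b t u * (b u g * x g))
            - (if g = t then b t u * b u t * x t else 0)
            - (if g = u then c u * b t u * x u else 0) := by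
        intro g
        by_cases hgt : g = t
        · subst hgt
          rw [hbt0 g ht, if_pos rfl, if_neg (htne g ht), h4 g (hmemR g ht)]
          ring
        · by_cases hgu : g = u
          · rw [hgu, hbu0 t ht, if_neg (Ne.symm (htne t ht)), if_pos rfl, h4 u huR]
            ring
          · rw [hbval t g hgt hgu, if_neg hgt, if_neg hgu]
            ring
      rw [Finset.sum_congr rfl (fun g _ => expand g)]
      rw [Finset.sum_sub_distrib, Finset.sum_sub_distrib, Finset.sum_add_distrib,
        ← Finset.mul_sum, ← Finset.mul_sum,
        Finset.sum_ite_eq' Finset.univ t (fun _ => b t u * b u t * x t),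
        Finset.sum_ite_eq' Finset.univ u (fun _ => c u * b t u * x u)]
      simp

    have h2' : ∀ t ∈ R, ∀ g, 0 ≤ b' t g := by
      intro t ht g
      by_cases hgt : g = t
      · rw [hgt, hbt0 t ht]
      · by_cases hgu : g = u
        · rw [hgu, hbu0 t ht]
        · rw [hbval t g hgt hgu]
          exact add_nonneg (mul_nonneg hcu_pos.le (h2 t (hmemR t ht) g))
            (mul_nonneg (h2 t (hmemR t ht) u) (hbu_nonneg g))
    have h1' : ∀ t ∈ R, ∀ x, P x → 0 < c' t * x t - ∑ g, b' t g * x g := by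
      intro t ht x hx
      have hA := h1 t (hmemR t ht) x hx
      have hB := h1 u huR x hx
      have hBnn := mul_nonneg (h2 t (hmemR t ht) u) (le_of_lt hB)
      have hApos := mul_pos hcu_pos hA
      have hexp : c' t * x t - ∑ g, b' t g * x g =
          c u * (c t * x t - ∑ g, b t g * x g) + b t u * (c u * x u - ∑ g, b u g * x g) := by
        rw [hsum t ht x]; simp only [hc'def]; ring
      rw [hexp]
      linarith
    have h3' : ∀ t ∈ R, ∑ g, b' t g < c' t := by
      intro t ht
      have hones := hsum t ht (fun _ => 1)
      simp only [mul_one] at hones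
      rw [hones]
      have e1 : c u * (∑ g, b t g) < c u * c t :=
        mul_lt_mul_of_pos_left (h3 t (hmemR t ht)) hcu_pos
      have e2 : b t u * (∑ g, b u g) ≤ b t u * c u :=
        mul_le_mul_of_nonneg_left (le_of_lt (h3 u huR)) (h2 t (hmemR t ht) u)
      simp only [hc'def]
      nlinarith
    have h4' : ∀ t ∈ R, b' t t = 0 := hbt0
    have h5' : ∀ t ∈ R, ∀ g, g ∉ Y → g ∉ R → b' t g = 0 := by
      intro t ht g hgY hgR
      have hgt : g ≠ t := fun h => hgR (h ▸ ht)
      by_cases hgu : g = u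
      · rw [hgu, hbu0 t ht]
      · have hbtg : b t g = 0 := h5 t (hmemR t ht) g hgY (by simp [hgu, hgR])
        have hbug : b u g = 0 := h5 u huR g hgY (by simp [hgu, hgR])
        rw [hbval t g hgt hgu, hbtg, hbug]
        ring
    obtain ⟨a', ha'0, ha'Y, ha'good, ha'sys⟩ := ihR hdisjR c' b' h1' h2' h3' h4' h5'
    -- the solution for root u
    set aU : α → ℝ := fun g =>
      if g ∈ Y then (b u g + ∑ t ∈ R, b u t * a' t g) / c u else 0 with haUdef
    have haU0 : ∀ g, 0 ≤ aU g := by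
      intro g
      simp only [haUdef]
      split_ifs
      · apply div_nonneg _ (le_of_lt hcu_pos)
        exact add_nonneg (hbu_nonneg g)
          (Finset.sum_nonneg fun t' ht' => mul_nonneg (hbu_nonneg t') (ha'0 t' ht' g))
      · exact le_refl 0

    have hcu_ne : c u ≠ 0 := ne_of_gt hcu_pos
    -- splitting sums over the support Y ∪ R for row u
    have hsplit : ∀ x : α → ℝ,
        ∑ g, b u g * x g = ∑ y ∈ Y, b u y * x y + ∑ t ∈ R, b u t * x t := by
      intro x
      rw [← Finset.sum_union hdisjR]
      symm
      apply Finset.sum_subset (Finset.subset_univ _)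
      intro g _ hg
      rw [Finset.mem_union] at hg
      push_neg at hg
      by_cases hgu : g = u
      · rw [hgu, h4 u huR, zero_mul]
      · rw [h5 u huR g hg.1 (by simp [hgu, hg.2]), zero_mul]
    -- a' rows really only live on Y
    have ha'res : ∀ t ∈ R, ∀ x : α → ℝ, ∑ g, a' t g * x g = ∑ y ∈ Y, a' t y * x y := by
      intro t ht x
      symm
      apply Finset.sum_subset (Finset.subset_univ _)
      intro g _ hg
      rw [ha'Y t ht g hg, zero_mul]
    -- the value of c u * aU y
    have haUval : ∀ y ∈ Y, c u * aU y = b u y + ∑ t ∈ R, b u t * a' t y := by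
      intro y hy
      simp only [haUdef, if_pos hy]
      field_simp
    have haUgood : ∀ x, P x → ∑ g, aU g * x g < x u := by
      intro x hx
      have hres : ∑ g, aU g * x g = ∑ y ∈ Y, aU y * x y := by
        symm
        apply Finset.sum_subset (Finset.subset_univ _)
        intro g _ hg
        simp [haUdef, hg]
      have hB := h1 u huR x hx
      have hkey : ∑ y ∈ Y, (c u * aU y) * x y ≤ ∑ g, b u g * x g + (c u * x u - c u * x u) := by
        rw [hsplit x]
        have hterm : ∀ t ∈ R, b u t * (∑ y ∈ Y, a' t y * x y) ≤ b u t * x t := by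
          intro t ht
          apply mul_le_mul_of_nonneg_left _ (hbu_nonneg t)
          rw [← ha'res t ht x]
          exact le_of_lt (ha'good t ht x hx)
        have hsum2 : ∑ y ∈ Y, (c u * aU y) * x y
            = ∑ y ∈ Y, b u y * x y + ∑ t ∈ R, b u t * (∑ y ∈ Y, a' t y * x y) := by
          have : ∀ y ∈ Y, (c u * aU y) * x y
              = b u y * x y + ∑ t ∈ R, b u t * (a' t y * x y) := by
            intro y hy
            rw [haUval y hy]
            rw [add_mul, Finset.sum_mul]
            congr 1
            exact Finset.sum_congr rfl (fun t _ => by ring)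
          rw [Finset.sum_congr rfl this, Finset.sum_add_distrib]
          congr 1
          rw [Finset.sum_comm]
          exact Finset.sum_congr rfl (fun t _ => by rw [Finset.mul_sum])
        rw [hsum2]
        have := Finset.sum_le_sum hterm
        linarith
      simp only [sub_self, add_zero] at hkey
      have hlt : ∑ y ∈ Y, (c u * aU y) * x y < c u * x u := lt_of_le_of_lt hkey (by linarith)
      have heq2 : ∑ y ∈ Y, (c u * aU y) * x y = c u * ∑ y ∈ Y, aU y * x y := by
        rw [Finset.mul_sum]
        exact Finset.sum_congr rfl (fun y _ => by ring)
      rw [heq2] at hlt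
      rw [hres]
      exact lt_of_mul_lt_mul_left hlt hcu_pos.le
    -- assemble the full solution
    refine ⟨fun t g => if t = u then aU g else a' t g, ?_, ?_, ?_, ?_⟩
    · intro t ht g
      by_cases htu : t = u
      · simpa [htu] using haU0 g
      · have htR : t ∈ R := (Finset.mem_insert.1 ht).resolve_left htu
        simpa [htu] using ha'0 t htR g
    · intro t ht g hgY
      by_cases htu : t = u
      · simp [htu, haUdef, hgY]
      · have htR : t ∈ R := (Finset.mem_insert.1 ht).resolve_left htu
        simpa [htu] using ha'Y t htR g hgY
    · intro t ht x hx
      by_cases htu : t = u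
      · subst htu
        simpa using haUgood x hx
      · have htR : t ∈ R := (Finset.mem_insert.1 ht).resolve_left htu
        simpa [htu] using ha'good t htR x hx
    · intro t ht y hy
      have hyu : y ≠ u := fun h => huY (h ▸ hy)
      by_cases htu : t = u
      · -- equality case
        subst htu
        rw [Finset.erase_insert hu]
        simp only [if_pos rfl]
        have : ∑ u' ∈ R, b t u' * (if u' = t then aU y else a' u' y)
            = ∑ u' ∈ R, b t u' * a' u' y := by
          apply Finset.sum_congr rfl
          intro u' hu'
          rw [if_neg (fun h => hu (by rw [h] at hu'; exact hu'))]
        rw [this]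
        exact le_of_eq (haUval y hy)
      · have htR : t ∈ R := (Finset.mem_insert.1 ht).resolve_left htu
        have hyt : y ≠ t := fun h => (Finset.disjoint_left.1 hdisjR hy) (h ▸ htR)
        have hIH := ha'sys t htR y hy
        -- rewrite the sum in the goal
        rw [Finset.erase_insert_of_ne (fun h => htu h.symm)]
        rw [Finset.sum_insert (fun h => hu (Finset.mem_of_mem_erase h))]
        simp only [eq_self_iff_true, if_true, if_neg htu]
        have hsumgoal : ∑ u' ∈ R.erase t, b t u' * (if u' = u then aU y else a' u' y)
            = ∑ u' ∈ R.erase t, b t u' * a' u' y := by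
          apply Finset.sum_congr rfl
          intro u' hu'
          have hu'R := Finset.mem_of_mem_erase hu'
          rw [if_neg (fun h => hu (by rw [h] at hu'R; exact hu'R))]
        rw [hsumgoal]
        set S1 := ∑ u' ∈ R.erase t, b t u' * a' u' y with hS1
        set S2 := ∑ u' ∈ R.erase t, b u u' * a' u' y with hS2
        have hE2 : ∑ u' ∈ R.erase t, b' t u' * a' u' y = c u * S1 + b t u * S2 := by
          rw [hS1, hS2, Finset.mul_sum, Finset.mul_sum, ← Finset.sum_add_distrib]
          apply Finset.sum_congr rfl
          intro u' hu'
          obtain ⟨hu't, hu'R⟩ := Finset.mem_erase.1 hu'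
          rw [hbval t u' hu't (fun h => hu (h ▸ hu'R))]
          ring
        have hb'ty : b' t y = c u * b t y + b t u * b u y := hbval t y hyt hyu
        have hE3 : c u * aU y = b u y + (S2 + b u t * a' t y) := by
          rw [haUval y hy, hS2]
          congr 1
          rw [← Finset.sum_erase_add R _ htR]
        have hculhs : c u * (c t * a' t y) ≤ c u * (b t y + (b t u * aU y + S1)) := by
          calc c u * (c t * a' t y)
              = c' t * a' t y + b t u * (b u t * a' t y) := by
                simp only [hc'def]; ring
            _ ≤ (b' t y + ∑ u' ∈ R.erase t, b' t u' * a' u' y)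
                  + b t u * (b u t * a' t y) := by linarith [hIH]
            _ = c u * b t y + c u * S1 + b t u * (b u y + (S2 + b u t * a' t y)) := by
                rw [hE2, hb'ty]; ring
            _ = c u * b t y + c u * S1 + b t u * (c u * aU y) := by rw [hE3]
            _ = c u * (b t y + (b t u * aU y + S1)) := by ring
        have hfin := le_of_mul_le_mul_left hculhs hcu_pos
        linarith [hfin]



end S3
end CGaux

/-- For every non-convex `Y`, there are a rooted set `(A, r)` with
`Y ∩ A = A \ {r}` and small positive coefficients `(a_g)` such that every point of
`K(ℛ₀)` satisfies `x_r > Σ_{g ∈ A \ {r}} a_g x_g`. -/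
theorem elimination_lemma_for_critical_circuits
    {α : Type*} [Fintype α] [DecidableEq α] (𝒞 : Set (Finset α))
    (hCG : IsConvexGeometry 𝒞) (Y : Finset α) (hY : Y ∉ 𝒞) :
    ∃ (A : Finset α) (r : α) (a : α → ℝ), r ∈ A ∧
      Y ∩ A = A.erase r ∧
      (∀ g ∈ A.erase r, 0 < a g ∧ a g ≤ 1 / (Y.card : ℝ)) ∧
      ∀ x : α → ℝ, (∀ C r', IsCriticalRootedCircuit 𝒞 C r' → x ∈ Kcr C r') →
        (∑ g ∈ A.erase r, a g * x g) < x r := by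
  classical
  set n := Fintype.card α with hn
  set D := CGaux.convC 𝒞 Y with hD
  have hDC : D ∈ 𝒞 := CGaux.convC_mem hCG Y
  have hYD : Y ⊆ D := CGaux.subset_convC Y
  set R := D \ Y with hR
  have hdisj : Disjoint Y R := Finset.disjoint_sdiff
  have hRne : R.Nonempty := by
    rcases Finset.eq_empty_or_nonempty R with h | h
    · exfalso
      have : D = Y := Finset.Subset.antisymm
        (fun d hd => by
          by_contra hdY
          have : d ∈ R := Finset.mem_sdiff.2 ⟨hd, hdY⟩
          simp [h] at this) hYD
      exact hY (this ▸ hDC)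
    · exact h
  have hYne : Y.Nonempty := by
    rcases Finset.eq_empty_or_nonempty Y with h | h
    · exact absurd (h ▸ hCG.1) hY
    · exact h
  -- every point of R admits a critical circuit inside D
  have hcrit : ∀ t ∈ R, ∃ C, C ⊆ D ∧ IsCriticalRootedCircuit 𝒞 C t := by
    intro t htR
    obtain ⟨htD, htY⟩ := Finset.mem_sdiff.1 htR
    have hWnot : D.erase t ∉ 𝒞 := by
      intro hcon
      have hsub : CGaux.convC 𝒞 Y ⊆ D.erase t := by
        apply CGaux.convC_subset hcon
        intro y hy
        refine Finset.mem_erase.2 ⟨?_, hYD hy⟩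
        intro h
        rw [h] at hy
        exact htY hy
      have : t ∈ D.erase t := hsub htD
      exact Finset.notMem_erase t D this
    exact CGaux.exists_critical hCG D.card D le_rfl hDC t htD hWnot
  choose! Ct hCtD hCtcrit using hcrit
  -- set up the linear data
  set P : (α → ℝ) → Prop :=
    fun x => ∀ C r', IsCriticalRootedCircuit 𝒞 C r' → x ∈ Kcr C r' with hP
  set c : α → ℝ := fun _ => (n : ℝ) with hc
  set b : α → α → ℝ := fun t g => if g ∈ (Ct t).erase t then 1 else 0 with hb
  have hbsum : ∀ t, ∀ x : α → ℝ, ∑ g, b t g * x g = ∑ e ∈ (Ct t).erase t, x e := by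
    intro t x
    rw [Finset.sum_congr rfl (fun g _ => by
      show b t g * x g = if g ∈ (Ct t).erase t then x g else 0
      simp only [hb]
      split_ifs <;> ring)]
    rw [Finset.sum_ite_mem, Finset.univ_inter]
  have h1 : ∀ t ∈ R, ∀ x, P x → 0 < c t * x t - ∑ g, b t g * x g := by
    intro t ht x hx
    have := hx (Ct t) t (hCtcrit t ht)
    rw [Kcr, Set.mem_setOf_eq] at this
    rw [hbsum t x]
    simp only [hc]
    linarith
  have h2 : ∀ t ∈ R, ∀ g, 0 ≤ b t g := by
    intro t _ g
    simp only [hb]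
    split_ifs <;> norm_num
  have h3 : ∀ t ∈ R, ∑ g, b t g < c t := by
    intro t ht
    have hcard := hbsum t (fun _ => 1)
    simp only [mul_one] at hcard
    rw [hcard, Finset.sum_const, nsmul_eq_mul, mul_one]
    have hroot : t ∈ Ct t := (hCtcrit t ht).1.1
    have hlt : ((Ct t).erase t).card < n := by
      calc ((Ct t).erase t).card < (Ct t).card := Finset.card_erase_lt_of_mem hroot
        _ ≤ n := Finset.card_le_univ _
    simp only [hc]
    exact_mod_cast hlt
  have h4 : ∀ t ∈ R, b t t = 0 := by
    intro t _
    simp [hb]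
  have h5 : ∀ t ∈ R, ∀ g, g ∉ Y → g ∉ R → b t g = 0 := by
    intro t ht g hgY hgR
    simp only [hb, ite_eq_right_iff]
    intro hgC
    exfalso
    have hgD : g ∈ D := hCtD t ht (Finset.mem_of_mem_erase hgC)
    exact hgR (Finset.mem_sdiff.2 ⟨hgD, hgY⟩)
  obtain ⟨a, ha0, haY, hagood, hasys⟩ := CGaux.NUM Y P R hdisj c b h1 h2 h3 h4 h5
  -- the uniform bound on the coefficients
  have hcardsum : Y.card + R.card ≤ n := by
    have : R.card = D.card - Y.card := by rw [hR, Finset.card_sdiff_of_subset hYD]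
    have hYD' := Finset.card_le_card hYD
    have hDn := Finset.card_le_univ D
    omega
  obtain ⟨p, hpmem, hpeq⟩ := Finset.exists_mem_eq_sup' (hRne.product hYne)
    (fun p : α × α => a p.1 p.2)
  set β := (R ×ˢ Y).sup' (hRne.product hYne) (fun p : α × α => a p.1 p.2) with hβ
  have hβle : ∀ t ∈ R, ∀ y ∈ Y, a t y ≤ β := by
    intro t ht y hy
    have hmem : (t, y) ∈ R ×ˢ Y := Finset.mem_product.2 ⟨ht, hy⟩
    exact Finset.le_sup' (fun p : α × α => a p.1 p.2) hmem
  obtain ⟨hpR, hpY⟩ := Finset.mem_product.1 hpmem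
  have hβ0 : 0 ≤ β := hpeq ▸ ha0 p.1 hpR p.2
  have hβbound : β * (n - R.card + 1 : ℝ) ≤ 1 := by
    have hsys := hasys p.1 hpR p.2 hpY
    have hb1 : b p.1 p.2 ≤ 1 := by
      simp only [hb]; split_ifs <;> norm_num
    have hterm : ∀ u ∈ R.erase p.1, b p.1 u * a u p.2 ≤ β := by
      intro u hu
      obtain ⟨_, huR⟩ := Finset.mem_erase.1 hu
      simp only [hb]
      split_ifs
      · simpa using hβle u huR p.2 hpY
      · simpa using hβ0
    have hsumle : ∑ u ∈ R.erase p.1, b p.1 u * a u p.2 ≤ (R.erase p.1).card • β :=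
      Finset.sum_le_card_nsmul _ _ β hterm
    have hcarderase : (R.erase p.1).card = R.card - 1 := Finset.card_erase_of_mem hpR
    have hRpos : 1 ≤ R.card := Finset.card_pos.2 hRne
    have hcast : ((R.erase p.1).card : ℝ) = (R.card : ℝ) - 1 := by
      rw [hcarderase, Nat.cast_sub hRpos, Nat.cast_one]
    rw [nsmul_eq_mul, hcast] at hsumle
    have hc' : c p.1 = (n : ℝ) := rfl
    have : (n : ℝ) * β ≤ 1 + ((R.card : ℝ) - 1) * β := by
      have := hpeq ▸ hsys
      rw [hc'] at hsys
      have hβeq : a p.1 p.2 = β := hpeq.symm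
      rw [hβeq] at hsys
      linarith
    nlinarith
  have hnR : (Y.card : ℝ) + 1 ≤ (n - R.card + 1 : ℝ) := by
    have : (Y.card : ℝ) + (R.card : ℝ) ≤ (n : ℝ) := by exact_mod_cast hcardsum
    linarith
  have hYcard_pos : 0 < (Y.card : ℝ) := by exact_mod_cast Finset.card_pos.2 hYne
  have hβfinal : β ≤ 1 / (Y.card : ℝ) := by
    rw [le_div_iff₀ hYcard_pos]
    nlinarith
  -- final assembly
  obtain ⟨t₀, ht₀⟩ := hRne
  have ht₀Y : t₀ ∉ Y := (Finset.mem_sdiff.1 ht₀).2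
  refine ⟨insert t₀ (Y.filter (fun y => 0 < a t₀ y)), t₀, a t₀,
    Finset.mem_insert_self _ _, ?_, ?_, ?_⟩
  · -- Y ∩ A = A.erase t₀
    have hfY : Y.filter (fun y => 0 < a t₀ y) ⊆ Y := Finset.filter_subset _ _
    have ht₀f : t₀ ∉ Y.filter (fun y => 0 < a t₀ y) := fun h => ht₀Y (hfY h)
    rw [Finset.erase_insert ht₀f]
    ext g
    simp only [Finset.mem_inter, Finset.mem_insert, Finset.mem_filter]
    constructor
    · rintro ⟨hgY, hg⟩
      rcases hg with h | h
      · exact absurd (h ▸ hgY) ht₀Y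
      · exact h
    · rintro ⟨hgY, hga⟩
      exact ⟨hgY, Or.inr ⟨hgY, hga⟩⟩
  · intro g hg
    have hfY : Y.filter (fun y => 0 < a t₀ y) ⊆ Y := Finset.filter_subset _ _
    have ht₀f : t₀ ∉ Y.filter (fun y => 0 < a t₀ y) := fun h => ht₀Y (hfY h)
    rw [Finset.erase_insert ht₀f] at hg
    obtain ⟨hgY, hga⟩ := Finset.mem_filter.1 hg
    exact ⟨hga, le_trans (le_trans (hβle t₀ ht₀ g hgY) hβfinal) le_rfl⟩
  · intro x hx
    have hfY : Y.filter (fun y => 0 < a t₀ y) ⊆ Y := Finset.filter_subset _ _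
    have ht₀f : t₀ ∉ Y.filter (fun y => 0 < a t₀ y) := fun h => ht₀Y (hfY h)
    rw [Finset.erase_insert ht₀f]
    have hgd := hagood t₀ ht₀ x hx
    have heq : ∑ g ∈ Y.filter (fun y => 0 < a t₀ y), a t₀ g * x g = ∑ g, a t₀ g * x g := by
      apply Finset.sum_subset (Finset.subset_univ _)
      intro g _ hg
      by_cases hgY : g ∈ Y
      · have hnotpos : ¬ 0 < a t₀ g := fun h => hg (Finset.mem_filter.2 ⟨hgY, h⟩)
        have : a t₀ g = 0 := le_antisymm (not_lt.1 hnotpos) (ha0 t₀ ht₀ g)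
        rw [this, zero_mul]
      · rw [haY t₀ ht₀ g hgY, zero_mul]
    rw [heq]
    exact hgd
end
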